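/- arXiv:2511.00009 — 3 statements merged into one kernel-verified Lean document; each statement's English description precedes it below -/
import Mathlib

section
/- The number of pairs (P,Q) of standard Young tableaux of the same shape with n boxes, summed over all partitions λ of n, equals n!; equivalently ∑_{λ ⊢ n} (f^λ)^2 = n!. -/
open scoped BigOperators

/-- The cells of the Young diagram of a partition given as a list of row lengths:
cell `(i, j)` is present iff `j` is less than the `i`-th row length. -/
def ptCells (l : List ℕ) : Finset (ℕ × ℕ) :=
  (Finset.range l.length).biUnion fun i => ({i} : Finset ℕ) ×ˢ Finset.range (l.getD i 0)

/-- A standard Young tableau of shape `l`: a bijective filling of the cells by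
`{0,…,n-1}` (equivalently `{1,…,n}`) strictly increasing along rows and columns. -/
def IsSYT (l : List ℕ) (T : ptCells l → Fin l.sum) : Prop :=
  Function.Bijective T ∧
    (∀ c d : ptCells l,
      (c : ℕ × ℕ).1 = (d : ℕ × ℕ).1 → (c : ℕ × ℕ).2 < (d : ℕ × ℕ).2 → T c < T d) ∧
    (∀ c d : ptCells l,
      (c : ℕ × ℕ).2 = (d : ℕ × ℕ).2 → (c : ℕ × ℕ).1 < (d : ℕ × ℕ).1 → T c < T d)

/-- `f^λ`: the number of standard Young tableaux of shape `l`. -/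
noncomputable def sytCount (l : List ℕ) : ℕ :=
  Nat.card {T : ptCells l → Fin l.sum // IsSYT l T}

/-- The row lengths of a partition of `n`, as a weakly decreasing list. -/
def partList {n : ℕ} (μ : n.Partition) : List ℕ := μ.parts.sort (· ≥ ·)

namespace RSK
open Finset YoungDiagram

instance : DecidableEq YoungDiagram := fun μ ν =>
  decidable_of_iff (μ.cells = ν.cells) ⟨YoungDiagram.ext, fun h => by rw [h]⟩

lemma mem_cells' (μ : YoungDiagram) (c : ℕ × ℕ) : c ∈ μ.cells ↔ c.2 < μ.rowLen c.1 := by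
  rw [YoungDiagram.mem_cells, ← YoungDiagram.mem_iff_lt_rowLen]

lemma lower (μ : YoungDiagram) {i1 j1 i2 j2 : ℕ} (hi : i1 ≤ i2) (hj : j1 ≤ j2)
    (h : (i2, j2) ∈ μ.cells) : (i1, j1) ∈ μ.cells := by
  rw [YoungDiagram.mem_cells] at h ⊢
  exact μ.up_left_mem hi hj h

/-- ν covers μ in Young's lattice. -/
def Cover (μ ν : YoungDiagram) : Prop := μ ≤ ν ∧ ν.cells.card = μ.cells.card + 1

lemma cover_exists {μ ν : YoungDiagram} (h : Cover μ ν) :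
    ∃ c, c ∉ μ.cells ∧ ν.cells = insert c μ.cells := by
  obtain ⟨hle, hcard⟩ := h
  have hsub : μ.cells ⊆ ν.cells := YoungDiagram.cells_subset_iff.mpr hle
  have h1 : (ν.cells \ μ.cells).card = 1 := by
    rw [card_sdiff_of_subset hsub, hcard]; omega
  obtain ⟨c, hc⟩ := Finset.card_eq_one.mp h1
  have hcmem : c ∈ ν.cells \ μ.cells := hc ▸ Finset.mem_singleton_self c
  rw [Finset.mem_sdiff] at hcmem
  refine ⟨c, hcmem.2, ?_⟩
  apply Finset.Subset.antisymm
  · intro x hx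
    by_cases hxμ : x ∈ μ.cells
    · exact Finset.mem_insert_of_mem hxμ
    · have hx' : x ∈ ν.cells \ μ.cells := Finset.mem_sdiff.mpr ⟨hx, hxμ⟩
      rw [hc, Finset.mem_singleton] at hx'
      rw [hx']
      exact Finset.mem_insert_self c _
  · intro x hx
    rcases Finset.mem_insert.mp hx with rfl | hxμ
    · exact hcmem.1
    · exact hsub hxμ

/-- Row `i` admits a new box at the end. -/
def Addable (μ : YoungDiagram) (i : ℕ) : Prop := i = 0 ∨ μ.rowLen i < μ.rowLen (i - 1)

/-- Row `i` admits removing its last box. -/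
def Removable (μ : YoungDiagram) (i : ℕ) : Prop := μ.rowLen (i + 1) < μ.rowLen i

instance (μ : YoungDiagram) : DecidablePred (Addable μ) := fun _ => instDecidableOr
instance (μ : YoungDiagram) : DecidablePred (Removable μ) := fun _ => Nat.decLt _ _

lemma insert_isLowerSet {μ : YoungDiagram} {i : ℕ} (h : Addable μ i) :
    IsLowerSet (↑(insert (i, μ.rowLen i) μ.cells) : Set (ℕ × ℕ)) := by
  intro y x hxy hy
  simp only [Finset.coe_insert, Set.mem_insert_iff, Finset.mem_coe] at hy ⊢
  obtain ⟨x1, x2⟩ := x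
  obtain ⟨y1, y2⟩ := y
  obtain ⟨h1, h2⟩ := hxy
  simp only at h1 h2
  rcases hy with heq | hy
  · obtain ⟨e1, e2⟩ := Prod.mk.injEq .. ▸ heq
    subst e1; subst e2
    rcases Nat.lt_or_ge x1 y1 with hlt | hge
    · right
      rw [mem_cells' μ (x1, x2)]
      rcases h with rfl | h
      · omega
      · have hanti : μ.rowLen (y1-1) ≤ μ.rowLen x1 := μ.rowLen_anti _ _ (by omega)
        simp only
        omega
    · have hx1 : x1 = y1 := le_antisymm h1 hge
      subst hx1
      rcases Nat.lt_or_ge x2 (μ.rowLen x1) with h2' | h2'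
      · right; rw [mem_cells' μ (x1, x2)]; exact h2'
      · left
        have : x2 = μ.rowLen x1 := by omega
        rw [this]
  · right
    exact lower μ h1 h2 hy

lemma erase_isLowerSet {μ : YoungDiagram} {i : ℕ} (h : Removable μ i) :
    IsLowerSet (↑(μ.cells.erase (i, μ.rowLen i - 1)) : Set (ℕ × ℕ)) := by
  have hpos : 0 < μ.rowLen i := lt_of_le_of_lt (Nat.zero_le _) h
  intro y x hxy hy
  simp only [Finset.coe_erase, Set.mem_diff, Finset.mem_coe, Set.mem_singleton_iff] at hy ⊢
  obtain ⟨hyμ, hyne⟩ := hy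
  obtain ⟨x1, x2⟩ := x
  obtain ⟨y1, y2⟩ := y
  obtain ⟨h1, h2⟩ := hxy
  simp only at h1 h2
  refine ⟨lower μ h1 h2 hyμ, ?_⟩
  intro heq
  obtain ⟨e1, e2⟩ := Prod.mk.injEq .. ▸ heq
  subst e1; subst e2
  rw [mem_cells' μ (y1, y2)] at hyμ
  simp only at hyμ
  apply hyne
  rcases Nat.lt_or_ge y1 (x1+1) with hy1 | hy1
  · have hxy1 : y1 = x1 := by omega
    subst hxy1
    have : y2 = μ.rowLen y1 - 1 := by omega
    rw [this]
  · have hanti : μ.rowLen y1 ≤ μ.rowLen (x1+1) := μ.rowLen_anti _ _ hy1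
    unfold Removable at h
    omega

/-- Add a box at the end of row `i` (identity if not addable). -/
def addRow (μ : YoungDiagram) (i : ℕ) : YoungDiagram :=
  if h : Addable μ i then ⟨insert (i, μ.rowLen i) μ.cells, insert_isLowerSet h⟩ else μ

/-- Remove the last box of row `i` (identity if not removable). -/
def delRow (μ : YoungDiagram) (i : ℕ) : YoungDiagram :=
  if h : Removable μ i then ⟨μ.cells.erase (i, μ.rowLen i - 1), erase_isLowerSet h⟩ else μ

lemma addRow_cells {μ : YoungDiagram} {i : ℕ} (h : Addable μ i) :
    (addRow μ i).cells = insert (i, μ.rowLen i) μ.cells := by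
  simp [addRow, h]

lemma delRow_cells {μ : YoungDiagram} {i : ℕ} (h : Removable μ i) :
    (delRow μ i).cells = μ.cells.erase (i, μ.rowLen i - 1) := by
  simp [delRow, h]

lemma corner_not_mem (μ : YoungDiagram) (i : ℕ) : (i, μ.rowLen i) ∉ μ.cells := by
  rw [mem_cells']; exact lt_irrefl _

lemma rcorner_mem {μ : YoungDiagram} {i : ℕ} (h : Removable μ i) :
    (i, μ.rowLen i - 1) ∈ μ.cells := by
  rw [mem_cells']
  unfold Removable at h
  simp only
  omega

/-- Diagrams covering μ. -/
def up (μ : YoungDiagram) : Finset YoungDiagram :=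
  ((Finset.range (μ.colLen 0 + 1)).filter (Addable μ)).image (addRow μ)

/-- Diagrams covered by μ. -/
def down (μ : YoungDiagram) : Finset YoungDiagram :=
  ((Finset.range (μ.colLen 0)).filter (Removable μ)).image (delRow μ)

lemma addable_mem_range {μ : YoungDiagram} {i : ℕ} (h : Addable μ i) :
    i ∈ Finset.range (μ.colLen 0 + 1) := by
  rw [Finset.mem_range]
  rcases h with rfl | h
  · omega
  · have hm : (i-1, 0) ∈ μ.cells := by
      rw [mem_cells']; show 0 < μ.rowLen (i-1); omega
    rw [YoungDiagram.mem_cells, YoungDiagram.mem_iff_lt_colLen] at hm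
    omega

lemma removable_mem_range {μ : YoungDiagram} {i : ℕ} (h : Removable μ i) :
    i ∈ Finset.range (μ.colLen 0) := by
  rw [Finset.mem_range]
  have hm : (i, 0) ∈ μ.cells := by
    rw [mem_cells']
    unfold Removable at h
    simp only
    omega
  rw [YoungDiagram.mem_cells, YoungDiagram.mem_iff_lt_colLen] at hm
  exact hm

lemma mem_up {μ ν : YoungDiagram} : ν ∈ up μ ↔ Cover μ ν := by
  constructor
  · rintro hν
    simp only [up, Finset.mem_image, Finset.mem_filter] at hν
    obtain ⟨i, ⟨-, hi⟩, rfl⟩ := hν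
    constructor
    · rw [← YoungDiagram.cells_subset_iff, addRow_cells hi]
      exact Finset.subset_insert _ _
    · rw [addRow_cells hi, Finset.card_insert_of_notMem (corner_not_mem μ i)]
  · intro h
    obtain ⟨c, hcnot, hcells⟩ := cover_exists h
    obtain ⟨i, j⟩ := c
    have hcν : (i, j) ∈ ν.cells := by rw [hcells]; exact Finset.mem_insert_self _ _
    rw [mem_cells'] at hcnot
    simp only at hcnot
    have hj2 : j ≤ μ.rowLen i := by
      by_contra hgt
      push_neg at hgt
      have hmem : (i, j-1) ∈ ν.cells := lower ν le_rfl (by omega) hcν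
      rw [hcells, Finset.mem_insert] at hmem
      rcases hmem with heq | hmem
      · have : j - 1 = j := congrArg Prod.snd heq
        omega
      · rw [mem_cells'] at hmem
        simp only at hmem
        omega
    have hj : j = μ.rowLen i := by omega
    subst hj
    have haddable : Addable μ i := by
      rcases Nat.eq_zero_or_pos i with rfl | hipos
      · exact Or.inl rfl
      · right
        have hmem : (i-1, μ.rowLen i) ∈ ν.cells := lower ν (by omega) le_rfl hcν
        rw [hcells, Finset.mem_insert] at hmem
        rcases hmem with heq | hmem
        · have : i - 1 = i := congrArg Prod.fst heq
          omega
        · rw [mem_cells'] at hmem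
          exact hmem
    simp only [up, Finset.mem_image, Finset.mem_filter]
    refine ⟨i, ⟨addable_mem_range haddable, haddable⟩, ?_⟩
    apply YoungDiagram.ext
    rw [addRow_cells haddable, hcells]

lemma mem_down {μ ν : YoungDiagram} : ν ∈ down μ ↔ Cover ν μ := by
  constructor
  · rintro hν
    simp only [down, Finset.mem_image, Finset.mem_filter] at hν
    obtain ⟨i, ⟨-, hi⟩, rfl⟩ := hν
    constructor
    · rw [← YoungDiagram.cells_subset_iff, delRow_cells hi]
      exact Finset.erase_subset _ _
    · rw [delRow_cells hi, Finset.card_erase_of_mem (rcorner_mem hi)]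
      have : 0 < μ.cells.card := Finset.card_pos.mpr ⟨_, rcorner_mem hi⟩
      omega
  · intro h
    obtain ⟨c, hcnot, hcells⟩ := cover_exists h
    obtain ⟨i, j⟩ := c
    have hcμ : (i, j) ∈ μ.cells := by rw [hcells]; exact Finset.mem_insert_self _ _
    have hup : (i, j+1) ∉ μ.cells := by
      intro hmem
      have hν' : (i, j+1) ∈ ν.cells := by
        rw [hcells, Finset.mem_insert] at hmem
        rcases hmem with heq | h'
        · have : j + 1 = j := congrArg Prod.snd heq
          omega
        · exact h'
      exact hcnot (lower ν le_rfl (by omega) hν')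
    have hright : (i+1, j) ∉ μ.cells := by
      intro hmem
      have hν' : (i+1, j) ∈ ν.cells := by
        rw [hcells, Finset.mem_insert] at hmem
        rcases hmem with heq | h'
        · have : i + 1 = i := congrArg Prod.fst heq
          omega
        · exact h'
      exact hcnot (lower ν (by omega) le_rfl hν')
    rw [mem_cells'] at hcμ hup hright
    simp only at hcμ hup hright
    have hj : j = μ.rowLen i - 1 := by omega
    have hrem : Removable μ i := by unfold Removable; omega
    simp only [down, Finset.mem_image, Finset.mem_filter]
    refine ⟨i, ⟨removable_mem_range hrem, hrem⟩, ?_⟩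
    apply YoungDiagram.ext
    rw [delRow_cells hrem]
    have hceq : ((i, j) : ℕ × ℕ) = (i, μ.rowLen i - 1) := by rw [hj]
    rw [← hceq, hcells, Finset.erase_insert hcnot]


lemma card_up (μ : YoungDiagram) :
    (up μ).card = ((Finset.range (μ.colLen 0 + 1)).filter (Addable μ)).card := by
  apply Finset.card_image_of_injOn
  intro i hi j hj hij
  simp only [coe_filter, Set.mem_setOf_eq] at hi hj
  have h1 : (i, μ.rowLen i) ∈ (addRow μ j).cells := by
    rw [← hij, addRow_cells hi.2]; exact Finset.mem_insert_self _ _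
  rw [addRow_cells hj.2, Finset.mem_insert] at h1
  rcases h1 with heq | hmem
  · exact congrArg Prod.fst heq
  · exact absurd hmem (corner_not_mem μ i)

lemma card_down (μ : YoungDiagram) :
    (down μ).card = ((Finset.range (μ.colLen 0)).filter (Removable μ)).card := by
  apply Finset.card_image_of_injOn
  intro i hi j hj hij
  simp only [coe_filter, Set.mem_setOf_eq] at hi hj
  by_contra hne
  have hj1 : (j, μ.rowLen j - 1) ∈ (delRow μ i).cells := by
    rw [delRow_cells hi.2]
    exact Finset.mem_erase_of_ne_of_mem
      (fun heq => hne (congrArg Prod.fst heq).symm) (rcorner_mem hj.2)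
  rw [hij, delRow_cells hj.2] at hj1
  exact (Finset.notMem_erase _ _) hj1

lemma addable_filter_eq (μ : YoungDiagram) :
    (Finset.range (μ.colLen 0 + 1)).filter (Addable μ) =
      insert 0 (((Finset.range (μ.colLen 0)).filter (Removable μ)).image Nat.succ) := by
  apply Finset.Subset.antisymm
  · intro j hj
    simp only [Finset.mem_filter, Finset.mem_range] at hj
    obtain ⟨hjr, hadd⟩ := hj
    rcases Nat.eq_zero_or_pos j with rfl | hpos
    · exact Finset.mem_insert_self _ _
    · apply Finset.mem_insert_of_mem
      simp only [Finset.mem_image, Finset.mem_filter, Finset.mem_range]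
      refine ⟨j - 1, ⟨?_, ?_⟩, by omega⟩
      · have := removable_mem_range (μ := μ) (i := j - 1) ?_
        · rwa [Finset.mem_range] at this
        · unfold Removable
          rcases hadd with rfl | h
          · omega
          · have : j - 1 + 1 = j := by omega
            rw [this]; exact h
      · unfold Removable
        rcases hadd with rfl | h
        · omega
        · have : j - 1 + 1 = j := by omega
          rw [this]; exact h
  · intro j hj
    rcases Finset.mem_insert.mp hj with rfl | hj
    · simp only [Finset.mem_filter, Finset.mem_range]
      exact ⟨by omega, Or.inl rfl⟩
    · simp only [Finset.mem_image, Finset.mem_filter, Finset.mem_range] at hj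
      obtain ⟨i, ⟨hir, hrem⟩, rfl⟩ := hj
      simp only [Finset.mem_filter, Finset.mem_range]
      exact ⟨by omega, Or.inr (by simpa [Removable] using hrem)⟩

lemma card_up_eq_card_down_add_one (μ : YoungDiagram) :
    (up μ).card = (down μ).card + 1 := by
  rw [card_up, card_down, addable_filter_eq]
  rw [Finset.card_insert_of_notMem (by simp)]
  rw [Finset.card_image_of_injective _ Nat.succ_injective]

lemma cover_card {α γ : YoungDiagram} (h : Cover α γ) : γ.cells.card = α.cells.card + 1 := h.2

/-- The key commutation identity `DU = UD + 1` on Young's lattice. -/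
lemma core_comm (α β : YoungDiagram) :
    ((up α).filter (fun γ => γ ∈ up β)).card =
      ((down α).filter (fun γ => γ ∈ down β)).card + if α = β then 1 else 0 := by
  rcases eq_or_ne α β with rfl | hne
  · rw [if_pos rfl, Finset.filter_true_of_mem (fun γ h => h),
      Finset.filter_true_of_mem (fun γ h => h)]
    exact card_up_eq_card_down_add_one α
  · rw [if_neg hne, add_zero]
    rcases eq_or_ne α.cells.card β.cells.card with hcard | hcard
    · set m := α.cells.card with hm
      have hksum : (α ⊓ β).cells.card + (α ⊔ β).cells.card = m + m := by
        rw [YoungDiagram.cells_inf, YoungDiagram.cells_sup]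
        rw [Finset.card_inter_add_card_union, ← hcard]
      have hklt : (α ⊓ β).cells.card < m := by
        rcases Nat.lt_or_ge ((α ⊓ β).cells.card) m with h | h
        · exact h
        · exfalso
          have hsub : (α ⊓ β).cells ⊆ α.cells :=
            YoungDiagram.cells_subset_iff.mpr inf_le_left
          have : (α ⊓ β).cells = α.cells := Finset.eq_of_subset_of_card_le hsub (by omega)
          have hab : α ≤ β := by
            have : α ⊓ β = α := YoungDiagram.ext this
            rw [← this]; exact inf_le_right
          have : α.cells = β.cells := Finset.eq_of_subset_of_card_le
            (YoungDiagram.cells_subset_iff.mpr hab) (by omega)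
          exact hne (YoungDiagram.ext this)
      rcases eq_or_ne ((α ⊓ β).cells.card) (m - 1) with hk | hk
      · -- both sides are singletons
        have h1 : (up α).filter (fun γ => γ ∈ up β) = {α ⊔ β} := by
          apply Finset.eq_singleton_iff_unique_mem.mpr
          constructor
          · simp only [Finset.mem_filter, mem_up]
            have hsupcard : (α ⊔ β).cells.card = m + 1 := by omega
            exact ⟨⟨le_sup_left, hsupcard⟩, ⟨le_sup_right, by omega⟩⟩
          · intro γ hγ
            simp only [Finset.mem_filter, mem_up] at hγ
            obtain ⟨⟨hle1, hc1⟩, ⟨hle2, hc2⟩⟩ := hγ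
            have hle : α ⊔ β ≤ γ := sup_le hle1 hle2
            symm
            apply YoungDiagram.ext
            apply Finset.eq_of_subset_of_card_le (YoungDiagram.cells_subset_iff.mpr hle)
            omega
        have h2 : (down α).filter (fun γ => γ ∈ down β) = {α ⊓ β} := by
          apply Finset.eq_singleton_iff_unique_mem.mpr
          constructor
          · simp only [Finset.mem_filter, mem_down]
            exact ⟨⟨inf_le_left, by omega⟩, ⟨inf_le_right, by omega⟩⟩
          · intro γ hγ
            simp only [Finset.mem_filter, mem_down] at hγ
            obtain ⟨⟨hle1, hc1⟩, ⟨hle2, hc2⟩⟩ := hγ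
            have hle : γ ≤ α ⊓ β := le_inf hle1 hle2
            apply YoungDiagram.ext
            apply Finset.eq_of_subset_of_card_le (YoungDiagram.cells_subset_iff.mpr hle)
            omega
        rw [h1, h2]
        simp
      · -- both sides empty
        have h1 : (up α).filter (fun γ => γ ∈ up β) = ∅ := by
          apply Finset.eq_empty_of_forall_notMem
          intro γ hγ
          simp only [Finset.mem_filter, mem_up] at hγ
          obtain ⟨⟨hle1, hc1⟩, ⟨hle2, hc2⟩⟩ := hγ
          have hle : α ⊔ β ≤ γ := sup_le hle1 hle2
          have := Finset.card_le_card (YoungDiagram.cells_subset_iff.mpr hle)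
          omega
        have h2 : (down α).filter (fun γ => γ ∈ down β) = ∅ := by
          apply Finset.eq_empty_of_forall_notMem
          intro γ hγ
          simp only [Finset.mem_filter, mem_down] at hγ
          obtain ⟨⟨hle1, hc1⟩, ⟨hle2, hc2⟩⟩ := hγ
          have hle : γ ≤ α ⊓ β := le_inf hle1 hle2
          have := Finset.card_le_card (YoungDiagram.cells_subset_iff.mpr hle)
          omega
        rw [h1, h2]
    · -- cards differ: both sides empty
      have h1 : (up α).filter (fun γ => γ ∈ up β) = ∅ := by
        apply Finset.eq_empty_of_forall_notMem
        intro γ hγ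
        simp only [Finset.mem_filter, mem_up] at hγ
        obtain ⟨⟨-, e1⟩, -, e2⟩ := hγ
        omega
      have h2 : (down α).filter (fun γ => γ ∈ down β) = ∅ := by
        apply Finset.eq_empty_of_forall_notMem
        intro γ hγ
        simp only [Finset.mem_filter, mem_down] at hγ
        obtain ⟨⟨-, e1⟩, -, e2⟩ := hγ
        omega
      rw [h1, h2]

lemma up_down_iff {γ κ : YoungDiagram} : γ ∈ up κ ↔ κ ∈ down γ := by
  rw [mem_up, mem_down]

/-- Neighbours: `true` steps up, `false` steps down. -/
def nbr : Bool → YoungDiagram → Finset YoungDiagram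
  | true => up
  | false => down

/-- Number of lattice paths in Young's lattice from `α` to `β` following the step word `w`. -/
def pathCount : List Bool → YoungDiagram → YoungDiagram → ℕ
  | [], α, β => if α = β then 1 else 0
  | s :: w, α, β => ∑ γ ∈ nbr s α, pathCount w γ β

@[simp] lemma pathCount_nil (α β : YoungDiagram) :
    pathCount [] α β = if α = β then 1 else 0 := rfl

lemma pathCount_cons (s : Bool) (w : List Bool) (α β : YoungDiagram) :
    pathCount (s :: w) α β = ∑ γ ∈ nbr s α, pathCount w γ β := rfl

@[simp] lemma nbr_true : nbr true = up := rfl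
@[simp] lemma nbr_false : nbr false = down := rfl

lemma pathCount_cons_true (w : List Bool) (α β : YoungDiagram) :
    pathCount (true :: w) α β = ∑ γ ∈ up α, pathCount w γ β := rfl

lemma pathCount_cons_false (w : List Bool) (α β : YoungDiagram) :
    pathCount (false :: w) α β = ∑ γ ∈ down α, pathCount w γ β := rfl

lemma sum_ite_card {s T : Finset YoungDiagram} (hsub : s ⊆ T) (f : YoungDiagram → ℕ) :
    ∑ κ ∈ s, f κ = ∑ κ ∈ T, if κ ∈ s then f κ else 0 := by
  rw [Finset.sum_ite_mem, Finset.inter_eq_right.mpr hsub]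

set_option maxHeartbeats 1000000 in
lemma splice (w : List Bool) (α β : YoungDiagram) :
    pathCount (true :: false :: w) α β =
      pathCount (false :: true :: w) α β + pathCount w α β := by
  classical
  set T : Finset YoungDiagram :=
    ((up α).biUnion down) ∪ ((down α).biUnion up) ∪ {α} with hT
  have hαT : α ∈ T := by simp [hT]
  have hLHS : pathCount (true :: false :: w) α β =
      ∑ κ ∈ T, ((up α).filter (fun γ => γ ∈ up κ)).card * pathCount w κ β := by
    rw [pathCount_cons_true]
    simp_rw [pathCount_cons_false]
    have hstep : ∀ γ ∈ up α, ∑ κ ∈ down γ, pathCount w κ β =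
        ∑ κ ∈ T, if κ ∈ down γ then pathCount w κ β else 0 := by
      intro γ hγ
      apply sum_ite_card
      intro κ hκ
      simp only [hT, Finset.mem_union, Finset.mem_biUnion]
      exact Or.inl (Or.inl ⟨γ, hγ, hκ⟩)
    rw [Finset.sum_congr rfl hstep, Finset.sum_comm]
    apply Finset.sum_congr rfl
    intro κ hκ
    have : ∀ γ, (κ ∈ down γ) = (γ ∈ up κ) := fun γ => propext up_down_iff.symm
    simp_rw [this]
    rw [← Finset.sum_filter, Finset.sum_const, smul_eq_mul]
  have hRHS : pathCount (false :: true :: w) α β =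
      ∑ κ ∈ T, ((down α).filter (fun γ => γ ∈ down κ)).card * pathCount w κ β := by
    rw [pathCount_cons_false]
    simp_rw [pathCount_cons_true]
    have hstep : ∀ γ ∈ down α, ∑ κ ∈ up γ, pathCount w κ β =
        ∑ κ ∈ T, if κ ∈ up γ then pathCount w κ β else 0 := by
      intro γ hγ
      apply sum_ite_card
      intro κ hκ
      simp only [hT, Finset.mem_union, Finset.mem_biUnion]
      exact Or.inl (Or.inr ⟨γ, hγ, hκ⟩)
    rw [Finset.sum_congr rfl hstep, Finset.sum_comm]
    apply Finset.sum_congr rfl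
    intro κ hκ
    have : ∀ γ, (κ ∈ up γ) = (γ ∈ down κ) := fun γ => propext up_down_iff
    simp_rw [this]
    rw [← Finset.sum_filter, Finset.sum_const, smul_eq_mul]
  have hbase : pathCount w α β =
      ∑ κ ∈ T, (if α = κ then 1 else 0) * pathCount w κ β := by
    have : ∀ κ ∈ T, (if α = κ then 1 else 0) * pathCount w κ β =
        if κ = α then pathCount w κ β else 0 := by
      intro κ hκ
      by_cases h : κ = α
      · subst h; simp
      · rw [if_neg h, if_neg (fun hh => h hh.symm), zero_mul]
    rw [Finset.sum_congr rfl this, Finset.sum_ite_eq' T α (fun κ => pathCount w κ β),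
      if_pos hαT]
  rw [hLHS, hRHS, hbase, ← Finset.sum_add_distrib]
  apply Finset.sum_congr rfl
  intro κ hκ
  rw [← add_mul]
  congr 1
  exact core_comm α κ

lemma pathCount_append_true (w : List Bool) (α β : YoungDiagram) :
    pathCount (w ++ [true]) α β = ∑ γ ∈ down β, pathCount w α γ := by
  induction w generalizing α with
  | nil =>
    rw [List.nil_append, pathCount_cons_true]
    simp only [pathCount_nil]
    rw [Finset.sum_ite_eq' (up α) β (fun _ => 1)]
    have : ∀ γ ∈ down β, (if α = γ then 1 else 0) = if γ = α then 1 else 0 := by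
      intro γ _; by_cases h : γ = α
      · subst h; simp
      · rw [if_neg h, if_neg fun hh => h hh.symm]
    rw [Finset.sum_congr rfl this, Finset.sum_ite_eq' (down β) α (fun _ => 1)]
    have hiff : β ∈ up α ↔ α ∈ down β := up_down_iff
    by_cases h : β ∈ up α
    · rw [if_pos h, if_pos (hiff.mp h)]
    · rw [if_neg h, if_neg (fun hh => h (hiff.mpr hh))]
  | cons s w ih =>
    rw [List.cons_append, pathCount_cons]
    simp_rw [pathCount_cons]
    rw [Finset.sum_congr rfl (fun γ _ => ih γ)]
    exact Finset.sum_comm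

lemma pathCount_append_false (w : List Bool) (α β : YoungDiagram) :
    pathCount (w ++ [false]) α β = ∑ γ ∈ up β, pathCount w α γ := by
  induction w generalizing α with
  | nil =>
    rw [List.nil_append, pathCount_cons_false]
    simp only [pathCount_nil]
    rw [Finset.sum_ite_eq' (down α) β (fun _ => 1)]
    have : ∀ γ ∈ up β, (if α = γ then 1 else 0) = if γ = α then 1 else 0 := by
      intro γ _; by_cases h : γ = α
      · subst h; simp
      · rw [if_neg h, if_neg fun hh => h hh.symm]
    rw [Finset.sum_congr rfl this, Finset.sum_ite_eq' (up β) α (fun _ => 1)]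
    have hiff : α ∈ up β ↔ β ∈ down α := up_down_iff
    by_cases h : β ∈ down α
    · rw [if_pos h, if_pos (hiff.mpr h)]
    · rw [if_neg h, if_neg (fun hh => h (hiff.mp hh))]
  | cons s w ih =>
    rw [List.cons_append, pathCount_cons]
    simp_rw [pathCount_cons]
    rw [Finset.sum_congr rfl (fun γ _ => ih γ)]
    exact Finset.sum_comm

lemma moveD (k : ℕ) : ∀ (w : List Bool) (α β : YoungDiagram),
    pathCount (List.replicate (k+1) true ++ false :: w) α β =
      pathCount (false :: (List.replicate (k+1) true ++ w)) α β +
        (k+1) * pathCount (List.replicate k true ++ w) α β := by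
  induction k with
  | zero =>
    intro w α β
    simp only [List.replicate_succ, List.replicate_zero, List.cons_append, List.nil_append]
    rw [splice]
    ring
  | succ k ih =>
    intro w α β
    have e1 : List.replicate (k+2) true ++ false :: w =
        true :: (List.replicate (k+1) true ++ false :: w) := by
      simp [List.replicate_succ]
    rw [e1, pathCount_cons_true]
    have : ∀ γ ∈ up α, pathCount (List.replicate (k+1) true ++ false :: w) γ β =
        pathCount (false :: (List.replicate (k+1) true ++ w)) γ β +
          (k+1) * pathCount (List.replicate k true ++ w) γ β := fun γ _ => ih w γ β
    rw [Finset.sum_congr rfl this, Finset.sum_add_distrib, ← Finset.mul_sum]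
    have e2 : (∑ γ ∈ up α, pathCount (false :: (List.replicate (k+1) true ++ w)) γ β) =
        pathCount (true :: false :: (List.replicate (k+1) true ++ w)) α β := by
      rw [pathCount_cons_true]
    have e3 : (∑ γ ∈ up α, pathCount (List.replicate k true ++ w) γ β) =
        pathCount (List.replicate (k+1) true ++ w) α β := by
      rw [List.replicate_succ, List.cons_append, pathCount_cons_true]
    rw [e2, e3, splice]
    have e4 : List.replicate (k+2) true ++ w =
        true :: (List.replicate (k+1) true ++ w) := by simp [List.replicate_succ]
    rw [e4]
    ring

lemma down_bot : down ⊥ = ∅ := by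
  apply Finset.eq_empty_of_forall_notMem
  intro ν hν
  rw [mem_down] at hν
  obtain ⟨-, hcard⟩ := hν
  simp [YoungDiagram.cells_bot] at hcard

lemma pathCount_factorial (n : ℕ) :
    pathCount (List.replicate n true ++ List.replicate n false) ⊥ ⊥ = n.factorial := by
  induction n with
  | zero => simp [pathCount_nil]
  | succ n ih =>
    have e1 : List.replicate (n+1) false = false :: List.replicate n false := by
      simp [List.replicate_succ]
    rw [e1, moveD n (List.replicate n false) ⊥ ⊥]
    rw [pathCount_cons_false, down_bot, Finset.sum_empty, zero_add, ih, Nat.factorial_succ]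

/-- Standard fillings of an arbitrary cell set by `Fin m`. -/
def TabsOn (S : Finset (ℕ × ℕ)) (m : ℕ) : Type :=
  {T : S → Fin m // Function.Bijective T ∧
    (∀ c d : S, (c : ℕ × ℕ).1 = (d : ℕ × ℕ).1 → (c : ℕ × ℕ).2 < (d : ℕ × ℕ).2 → T c < T d) ∧
    (∀ c d : S, (c : ℕ × ℕ).2 = (d : ℕ × ℕ).2 → (c : ℕ × ℕ).1 < (d : ℕ × ℕ).1 → T c < T d)}

instance (S : Finset (ℕ × ℕ)) (m : ℕ) : Finite (TabsOn S m) := Subtype.finite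

lemma tabsOn_congr {S S' : Finset (ℕ × ℕ)} {m m' : ℕ} (h1 : S = S') (h2 : m = m') :
    TabsOn S m = TabsOn S' m' := by subst h1; subst h2; rfl

lemma nat_card_sigma {ι : Type*} [Fintype ι] (f : ι → Type*) [∀ i, Finite (f i)] :
    Nat.card (Σ i, f i) = ∑ i, Nat.card (f i) := by
  letI : ∀ i, Fintype (f i) := fun i => Fintype.ofFinite _
  simp only [Nat.card_eq_fintype_card]
  exact Fintype.card_sigma

lemma tabsOn_empty : Nat.card
    (TabsOn (∅ : Finset (ℕ × ℕ)) 0) = 1 := by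
  haveI : Nonempty (TabsOn (∅ : Finset (ℕ × ℕ)) 0) := by
    refine ⟨⟨fun c => absurd c.2 (Finset.notMem_empty _), ?_, ?_, ?_⟩⟩
    · constructor
      · intro a; exact absurd a.2 (Finset.notMem_empty _)
      · intro y; exact y.elim0
    · intro c; exact absurd c.2 (Finset.notMem_empty _)
    · intro c; exact absurd c.2 (Finset.notMem_empty _)
  haveI : Subsingleton (TabsOn (∅ : Finset (ℕ × ℕ)) 0) := by
    constructor
    intro a b
    apply Subtype.ext
    funext c
    exact absurd c.2 (Finset.notMem_empty _)
  exact Nat.card_unique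

/-- Monotonicity in the product order of a standard filling of a Young diagram. -/
lemma tab_mono {μ : YoungDiagram} {m : ℕ} (f : {x // x ∈ μ.cells} → Fin m)
    (hrow : ∀ c d : {x // x ∈ μ.cells},
      (c : ℕ × ℕ).1 = (d : ℕ × ℕ).1 → (c : ℕ × ℕ).2 < (d : ℕ × ℕ).2 → f c < f d)
    (hcol : ∀ c d : {x // x ∈ μ.cells},
      (c : ℕ × ℕ).2 = (d : ℕ × ℕ).2 → (c : ℕ × ℕ).1 < (d : ℕ × ℕ).1 → f c < f d)
    (c d : {x // x ∈ μ.cells}) (h1 : (c : ℕ × ℕ).1 ≤ (d : ℕ × ℕ).1)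
    (h2 : (c : ℕ × ℕ).2 ≤ (d : ℕ × ℕ).2) (hne : c ≠ d) : f c < f d := by
  rcases Nat.lt_or_ge (c : ℕ × ℕ).1 (d : ℕ × ℕ).1 with hlt | hge
  · rcases Nat.lt_or_ge (c : ℕ × ℕ).2 (d : ℕ × ℕ).2 with hlt2 | hge2
    · have hmemm : ((c : ℕ × ℕ).1, (d : ℕ × ℕ).2) ∈ μ.cells :=
        lower μ (le_of_lt hlt) le_rfl (by simpa using d.2)
      have hcm : f c < f ⟨((c : ℕ × ℕ).1, (d : ℕ × ℕ).2), hmemm⟩ :=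
        hrow c ⟨_, hmemm⟩ rfl hlt2
      have hmd : f ⟨((c : ℕ × ℕ).1, (d : ℕ × ℕ).2), hmemm⟩ < f d :=
        hcol ⟨_, hmemm⟩ d rfl hlt
      exact lt_trans hcm hmd
    · have he : (c : ℕ × ℕ).2 = (d : ℕ × ℕ).2 := le_antisymm h2 hge2
      exact hcol c d he hlt
  · have he : (c : ℕ × ℕ).1 = (d : ℕ × ℕ).1 := le_antisymm h1 hge
    rcases Nat.lt_or_ge (c : ℕ × ℕ).2 (d : ℕ × ℕ).2 with hlt2 | hge2
    · exact hrow c d he hlt2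
    · exfalso
      apply hne
      apply Subtype.ext
      exact Prod.ext he (le_antisymm h2 hge2)

/-- The unique cell added in a cover. -/
noncomputable def topCell {ν μ : YoungDiagram} (h : Cover ν μ) : ℕ × ℕ :=
  (cover_exists h).choose

lemma topCell_not_mem {ν μ : YoungDiagram} (h : Cover ν μ) : topCell h ∉ ν.cells :=
  (cover_exists h).choose_spec.1

lemma topCell_insert {ν μ : YoungDiagram} (h : Cover ν μ) :
    μ.cells = insert (topCell h) ν.cells :=
  (cover_exists h).choose_spec.2

lemma topCell_mem {ν μ : YoungDiagram} (h : Cover ν μ) : topCell h ∈ μ.cells := by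
  rw [topCell_insert h]; exact Finset.mem_insert_self _ _

lemma topCell_unique {ν μ : YoungDiagram} (h : Cover ν μ) {a : ℕ × ℕ}
    (ha : a ∉ ν.cells) (hins : μ.cells = insert a ν.cells) : a = topCell h := by
  have : a ∈ μ.cells := by rw [hins]; exact Finset.mem_insert_self _ _
  rw [topCell_insert h, Finset.mem_insert] at this
  rcases this with h' | h'
  · exact h'
  · exact absurd h' ha

lemma mem_of_ne_topCell {ν μ : YoungDiagram} (h : Cover ν μ) {x : ℕ × ℕ}
    (hx : x ∈ μ.cells) (hne : x ≠ topCell h) : x ∈ ν.cells := by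
  rw [topCell_insert h, Finset.mem_insert] at hx
  tauto

lemma topCell_maximal {ν μ : YoungDiagram} (h : Cover ν μ) {x : ℕ × ℕ}
    (hx : x ∈ μ.cells) (h1 : (topCell h).1 ≤ x.1) (h2 : (topCell h).2 ≤ x.2)
    (hne : x ≠ topCell h) : False := by
  have hxν : x ∈ ν.cells := mem_of_ne_topCell h hx hne
  apply topCell_not_mem h
  have := lower ν (i1 := (topCell h).1) (j1 := (topCell h).2) h1 h2
    (by rw [Prod.mk.eta]; exact hxν)
  rwa [Prod.mk.eta] at this

section Psi

variable {μ ν : YoungDiagram} {n : ℕ}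

noncomputable def psiFun (hcov : Cover ν μ) (T : {x // x ∈ ν.cells} → Fin n) :
    {x // x ∈ μ.cells} → Fin (n + 1) :=
  fun x => if hx : x.1 = topCell hcov then Fin.last n
    else (T ⟨x.1, mem_of_ne_topCell hcov x.2 hx⟩).castSucc

lemma psiFun_top (hcov : Cover ν μ) (T : {x // x ∈ ν.cells} → Fin n)
    (x : {x // x ∈ μ.cells}) (hx : x.1 = topCell hcov) :
    psiFun hcov T x = Fin.last n := dif_pos hx

lemma psiFun_ne (hcov : Cover ν μ) (T : {x // x ∈ ν.cells} → Fin n)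
    (x : {x // x ∈ μ.cells}) (hx : ¬ (x.1 = topCell hcov)) :
    psiFun hcov T x = (T ⟨x.1, mem_of_ne_topCell hcov x.2 hx⟩).castSucc := dif_neg hx

lemma psiFun_props (hcov : Cover ν μ) (hcard : μ.cells.card = n + 1)
    (T : TabsOn ν.cells n) :
    Function.Bijective (psiFun hcov T.1) ∧
    (∀ c d : {x // x ∈ μ.cells}, (c : ℕ × ℕ).1 = (d : ℕ × ℕ).1 →
      (c : ℕ × ℕ).2 < (d : ℕ × ℕ).2 → psiFun hcov T.1 c < psiFun hcov T.1 d) ∧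
    (∀ c d : {x // x ∈ μ.cells}, (c : ℕ × ℕ).2 = (d : ℕ × ℕ).2 →
      (c : ℕ × ℕ).1 < (d : ℕ × ℕ).1 → psiFun hcov T.1 c < psiFun hcov T.1 d) := by
  obtain ⟨f, hbij, hrow, hcol⟩ := T
  refine ⟨?_, ?_, ?_⟩
  · rw [Fintype.bijective_iff_injective_and_card]
    constructor
    · intro a b hab
      by_cases ha : a.1 = topCell hcov <;> by_cases hb : b.1 = topCell hcov
      · exact Subtype.ext (ha.trans hb.symm)
      · rw [psiFun_top _ _ _ ha, psiFun_ne _ _ _ hb] at hab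
        exact absurd hab.symm (ne_of_lt (Fin.castSucc_lt_last _))
      · rw [psiFun_ne _ _ _ ha, psiFun_top _ _ _ hb] at hab
        exact absurd hab (ne_of_lt (Fin.castSucc_lt_last _))
      · rw [psiFun_ne _ _ _ ha, psiFun_ne _ _ _ hb] at hab
        have h2 := hbij.1 (Fin.castSucc_injective _ hab)
        have hval := congrArg Subtype.val h2
        exact Subtype.ext hval
    · rw [Fintype.card_coe, hcard, Fintype.card_fin]
  · intro c d hfst hsnd
    by_cases hd : d.1 = topCell hcov
    · have hcne : ¬ (c.1 = topCell hcov) := by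
        intro hcc; rw [hcc] at hfst hsnd; rw [hd] at hfst hsnd; omega
      rw [psiFun_top _ _ _ hd, psiFun_ne _ _ _ hcne]
      exact Fin.castSucc_lt_last _
    · have hcne : ¬ (c.1 = topCell hcov) := by
        intro hcc
        exact topCell_maximal hcov d.2 (le_of_eq (hcc ▸ hfst)) (le_of_lt (hcc ▸ hsnd)) hd
      rw [psiFun_ne _ _ _ hcne, psiFun_ne _ _ _ hd, Fin.castSucc_lt_castSucc_iff]
      exact hrow _ _ hfst hsnd
  · intro c d hsnd hfst
    by_cases hd : d.1 = topCell hcov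
    · have hcne : ¬ (c.1 = topCell hcov) := by
        intro hcc; rw [hcc] at hfst hsnd; rw [hd] at hfst hsnd; omega
      rw [psiFun_top _ _ _ hd, psiFun_ne _ _ _ hcne]
      exact Fin.castSucc_lt_last _
    · have hcne : ¬ (c.1 = topCell hcov) := by
        intro hcc
        exact topCell_maximal hcov d.2 (le_of_lt (hcc ▸ hfst)) (le_of_eq (hcc ▸ hsnd)) hd
      rw [psiFun_ne _ _ _ hcne, psiFun_ne _ _ _ hd, Fin.castSucc_lt_castSucc_iff]
      exact hcol _ _ hsnd hfst

noncomputable def psi (hcard : μ.cells.card = n + 1) :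
    (Σ ρ : {ρ // ρ ∈ down μ}, TabsOn (ρ : YoungDiagram).cells n) → TabsOn μ.cells (n + 1) :=
  fun p => ⟨psiFun (mem_down.mp p.1.2) p.2.1, psiFun_props (mem_down.mp p.1.2) hcard p.2⟩

lemma psi_injective (hcard : μ.cells.card = n + 1) : Function.Injective (psi hcard) := by
  rintro ⟨⟨ν, hν⟩, T⟩ ⟨⟨ρ, hρ⟩, S⟩ heq
  have hfun : psiFun (mem_down.mp hν) T.1 = psiFun (mem_down.mp hρ) S.1 :=
    congrArg Subtype.val heq
  have htop : topCell (mem_down.mp hν) = topCell (mem_down.mp hρ) := by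
    by_contra hne
    have h1 := congrFun hfun ⟨topCell (mem_down.mp hν), topCell_mem (mem_down.mp hν)⟩
    rw [psiFun_top _ _ _ rfl, psiFun_ne _ _ _ hne] at h1
    exact absurd h1 (ne_of_gt (Fin.castSucc_lt_last _))
  have hcells : ν = ρ := by
    apply YoungDiagram.ext
    have e1 : ν.cells = μ.cells.erase (topCell (mem_down.mp hν)) := by
      rw [topCell_insert (mem_down.mp hν),
        Finset.erase_insert (topCell_not_mem (mem_down.mp hν))]
    have e2 : ρ.cells = μ.cells.erase (topCell (mem_down.mp hρ)) := by
      rw [topCell_insert (mem_down.mp hρ),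
        Finset.erase_insert (topCell_not_mem (mem_down.mp hρ))]
    rw [e1, e2, htop]
  subst hcells
  have hTS : T = S := by
    apply Subtype.ext
    funext x
    have hxμ : x.1 ∈ μ.cells := (YoungDiagram.cells_subset_iff.mpr (mem_down.mp hν).1) x.2
    have hxne : ¬ (x.1 = topCell (mem_down.mp hν)) :=
      fun hcc => topCell_not_mem (mem_down.mp hν) (hcc ▸ x.2)
    have hxne' : ¬ (x.1 = topCell (mem_down.mp hρ)) := htop ▸ hxne
    have h1 := congrFun hfun ⟨x.1, hxμ⟩
    rw [psiFun_ne _ _ _ hxne, psiFun_ne _ _ _ hxne'] at h1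
    have h2 := Fin.castSucc_injective _ h1
    have e3 : (⟨(⟨x.1, hxμ⟩ : {x // x ∈ μ.cells}).1, mem_of_ne_topCell _ hxμ hxne⟩ :
        {x // x ∈ ν.cells}) = x := Subtype.ext rfl
    rwa [e3] at h2
  subst hTS
  rfl

lemma psi_surjective (hcard : μ.cells.card = n + 1) : Function.Surjective (psi hcard) := by
  rintro ⟨U, hbij, hrow, hcol⟩
  obtain ⟨ctop, hctop⟩ := hbij.2 (Fin.last n)
  have hmax : ∀ x ∈ μ.cells, ctop.1.1 ≤ x.1 → ctop.1.2 ≤ x.2 → x ≠ ctop.1 → False := by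
    intro x hx h1 h2 hne
    have hlt : U ctop < U ⟨x, hx⟩ := by
      apply tab_mono U hrow hcol _ _ h1 h2
      intro hcc
      exact hne (congrArg Subtype.val hcc).symm
    rw [hctop] at hlt
    exact absurd hlt (Fin.not_lt.mpr (Fin.le_last _))
  have hlow : IsLowerSet (↑(μ.cells.erase ctop.1) : Set (ℕ × ℕ)) := by
    intro y x hxy hy
    simp only [Finset.coe_erase, Set.mem_diff, Finset.mem_coe, Set.mem_singleton_iff] at hy ⊢
    obtain ⟨hyμ, hyne⟩ := hy
    obtain ⟨x1, x2⟩ := x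
    obtain ⟨y1, y2⟩ := y
    obtain ⟨h1, h2⟩ := hxy
    simp only at h1 h2
    refine ⟨lower μ h1 h2 hyμ, ?_⟩
    intro heq
    apply hmax (y1, y2) hyμ ?_ ?_ hyne
    · rw [← heq]; exact h1
    · rw [← heq]; exact h2
  set νc : YoungDiagram := ⟨μ.cells.erase ctop.1, hlow⟩ with hνc
  have hctopmem : ctop.1 ∈ μ.cells := ctop.2
  have hcov : Cover νc μ := by
    constructor
    · rw [← YoungDiagram.cells_subset_iff]
      exact Finset.erase_subset _ _
    · show μ.cells.card = (μ.cells.erase ctop.1).card + 1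
      rw [Finset.card_erase_of_mem hctopmem]
      have : 0 < μ.cells.card := Finset.card_pos.mpr ⟨_, hctopmem⟩
      omega
  have hν : νc ∈ down μ := mem_down.mpr hcov
  have htopeq : ctop.1 = topCell (mem_down.mp hν) := by
    apply topCell_unique
    · exact Finset.notMem_erase _ _
    · show μ.cells = insert ctop.1 (μ.cells.erase ctop.1)
      rw [Finset.insert_erase hctopmem]
  have hUlt : ∀ x : {x // x ∈ νc.cells},
      (U ⟨x.1, Finset.mem_of_mem_erase x.2⟩ : Fin (n+1)).val < n := by
    intro x
    have hne : (⟨x.1, Finset.mem_of_mem_erase x.2⟩ : {x // x ∈ μ.cells}) ≠ ctop := by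
      intro hcc
      exact (Finset.ne_of_mem_erase x.2) (congrArg Subtype.val hcc)
    have hne2 : U ⟨x.1, Finset.mem_of_mem_erase x.2⟩ ≠ Fin.last n := by
      rw [← hctop]
      exact fun hcc => hne (hbij.1 hcc)
    have hisLt := (U ⟨x.1, Finset.mem_of_mem_erase x.2⟩).isLt
    rcases Nat.lt_or_ge (U ⟨x.1, Finset.mem_of_mem_erase x.2⟩).val n with h | h
    · exact h
    · exfalso
      apply hne2
      apply Fin.ext
      rw [Fin.val_last]
      omega
  set T : {x // x ∈ νc.cells} → Fin n :=
    fun x => ⟨(U ⟨x.1, Finset.mem_of_mem_erase x.2⟩).val, hUlt x⟩ with hT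
  have hTbij : Function.Bijective T := by
    rw [Fintype.bijective_iff_injective_and_card]
    constructor
    · intro a b hab
      have hv0 := congrArg Fin.val hab
      have hv : (U ⟨a.1, Finset.mem_of_mem_erase a.2⟩).val =
          (U ⟨b.1, Finset.mem_of_mem_erase b.2⟩).val := hv0
      have h2 := hbij.1 (Fin.ext hv)
      have hval := congrArg Subtype.val h2
      exact Subtype.ext hval
    · rw [Fintype.card_coe, Fintype.card_fin]
      show (μ.cells.erase ctop.1).card = n
      rw [Finset.card_erase_of_mem hctopmem, hcard]
      omega
  have hTrow : ∀ c d : {x // x ∈ νc.cells}, (c : ℕ × ℕ).1 = (d : ℕ × ℕ).1 →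
      (c : ℕ × ℕ).2 < (d : ℕ × ℕ).2 → T c < T d := by
    intro c d h1 h2
    have := hrow ⟨c.1, Finset.mem_of_mem_erase c.2⟩ ⟨d.1, Finset.mem_of_mem_erase d.2⟩ h1 h2
    rwa [Fin.lt_iff_val_lt_val] at this ⊢
  have hTcol : ∀ c d : {x // x ∈ νc.cells}, (c : ℕ × ℕ).2 = (d : ℕ × ℕ).2 →
      (c : ℕ × ℕ).1 < (d : ℕ × ℕ).1 → T c < T d := by
    intro c d h1 h2
    have := hcol ⟨c.1, Finset.mem_of_mem_erase c.2⟩ ⟨d.1, Finset.mem_of_mem_erase d.2⟩ h1 h2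
    rwa [Fin.lt_iff_val_lt_val] at this ⊢
  refine ⟨⟨⟨νc, hν⟩, T, hTbij, hTrow, hTcol⟩, ?_⟩
  apply Subtype.ext
  funext x
  show psiFun (mem_down.mp hν) T x = U x
  by_cases hx : x.1 = topCell (mem_down.mp hν)
  · rw [psiFun_top _ _ _ hx]
    have hxc : x = ctop := Subtype.ext (by rw [hx, ← htopeq])
    rw [hxc, hctop]
  · rw [psiFun_ne _ _ _ hx]
    apply Fin.ext
    show (U _).val = (U x).val
    congr 1

end Psi

lemma tab_card_succ {μ : YoungDiagram} {n : ℕ} (hcard : μ.cells.card = n + 1) :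
    Nat.card (TabsOn μ.cells (n + 1)) = ∑ ν ∈ down μ, Nat.card (TabsOn ν.cells n) := by
  rw [Nat.card_congr (Equiv.ofBijective (psi hcard)
    ⟨psi_injective hcard, psi_surjective hcard⟩).symm]
  rw [nat_card_sigma]
  rw [← Finset.sum_coe_sort (down μ) (fun ν => Nat.card (TabsOn ν.cells n))]

lemma tab_count (n : ℕ) : ∀ μ : YoungDiagram, μ.cells.card = n →
    Nat.card (TabsOn μ.cells n) = pathCount (List.replicate n true) ⊥ μ := by
  induction n with
  | zero =>
    intro μ hμ
    have hbot : μ = ⊥ := by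
      apply YoungDiagram.ext
      rw [YoungDiagram.cells_bot]
      exact Finset.card_eq_zero.mp hμ
    subst hbot
    rw [YoungDiagram.cells_bot]
    simp only [List.replicate_zero, pathCount_nil, if_pos rfl]
    exact tabsOn_empty
  | succ n ih =>
    intro μ hμ
    rw [tab_card_succ hμ]
    have hrep : List.replicate (n+1) true = List.replicate n true ++ [true] := by
      rw [← List.replicate_succ' (n := n) (a := true)]
    rw [hrep, pathCount_append_true]
    apply Finset.sum_congr rfl
    intro ν hν
    have hcov : Cover ν μ := mem_down.mp hν
    have hν' : ν.cells.card = n := by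
      have := hcov.2
      omega
    rw [ih ν hν']

lemma pathCount_append_sum (w1 w2 : List Bool) :
    ∀ (α β : YoungDiagram) (T : Finset YoungDiagram),
      (∀ γ, pathCount w1 α γ ≠ 0 → γ ∈ T) →
      pathCount (w1 ++ w2) α β = ∑ γ ∈ T, pathCount w1 α γ * pathCount w2 γ β := by
  induction w1 with
  | nil =>
    intro α β T hT
    have hαT : α ∈ T := hT α (by simp)
    rw [List.nil_append]
    have hconv : ∀ γ ∈ T, pathCount [] α γ * pathCount w2 γ β =
        if γ = α then pathCount w2 γ β else 0 := by
      intro γ _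
      rw [pathCount_nil]
      by_cases h : γ = α
      · subst h; rw [if_pos rfl, if_pos rfl, one_mul]
      · rw [if_neg h, if_neg (fun hh => h hh.symm), zero_mul]
    rw [Finset.sum_congr rfl hconv, Finset.sum_ite_eq' T α, if_pos hαT]
  | cons s w1 ih =>
    intro α β T hT
    rw [List.cons_append, pathCount_cons]
    have hstep : ∀ δ ∈ nbr s α, pathCount (w1 ++ w2) δ β =
        ∑ γ ∈ T, pathCount w1 δ γ * pathCount w2 γ β := by
      intro δ hδ
      apply ih
      intro γ hγ
      apply hT
      rw [pathCount_cons]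
      intro hzero
      exact hγ (Finset.sum_eq_zero_iff.mp hzero δ hδ)
    rw [Finset.sum_congr rfl hstep, Finset.sum_comm]
    apply Finset.sum_congr rfl
    intro γ _
    rw [pathCount_cons, Finset.sum_mul]

lemma down_up_count (k : ℕ) : ∀ α : YoungDiagram,
    pathCount (List.replicate k false) α ⊥ = pathCount (List.replicate k true) ⊥ α := by
  induction k with
  | zero =>
    intro α
    simp only [List.replicate_zero, pathCount_nil]
    by_cases h : α = ⊥
    · subst h; rfl
    · rw [if_neg h, if_neg (fun hh => h hh.symm)]
  | succ k ih =>
    intro α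
    rw [List.replicate_succ, pathCount_cons_false]
    rw [Finset.sum_congr rfl (fun γ _ => ih γ)]
    rw [← pathCount_append_true (List.replicate k true) ⊥ α, ← List.replicate_succ']

lemma pathCount_true_card (k : ℕ) : ∀ γ : YoungDiagram,
    pathCount (List.replicate k true) ⊥ γ ≠ 0 → γ.cells.card = k := by
  induction k with
  | zero =>
    intro γ h
    simp only [List.replicate_zero, pathCount_nil] at h
    have hbot : ⊥ = γ := by
      by_contra hne
      exact h (if_neg hne)
    rw [← hbot, YoungDiagram.cells_bot]
    rfl
  | succ k ih =>
    intro γ h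
    rw [List.replicate_succ', pathCount_append_true] at h
    obtain ⟨ν, hν, hne⟩ : ∃ ν ∈ down γ, pathCount (List.replicate k true) ⊥ ν ≠ 0 := by
      by_contra hall
      push_neg at hall
      exact h (Finset.sum_eq_zero hall)
    have hcov := mem_down.mp hν
    rw [hcov.2, ih ν hne]

section Partitions

lemma partList_sorted {n : ℕ} (p : n.Partition) : (partList p).SortedGE :=
  (Multiset.pairwise_sort _ _).sortedGE

lemma partList_coe {n : ℕ} (p : n.Partition) : (↑(partList p) : Multiset ℕ) = p.parts :=
  Multiset.sort_eq _ _

lemma partList_pos {n : ℕ} (p : n.Partition) : ∀ x ∈ partList p, 0 < x := by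
  intro x hx
  apply p.parts_pos
  rw [← partList_coe p]
  exact Multiset.mem_coe.mpr hx

lemma partList_sum {n : ℕ} (p : n.Partition) : (partList p).sum = n := by
  rw [← Multiset.sum_coe, partList_coe, p.parts_sum]

/-- The Young diagram of a partition. -/
def pdiag {n : ℕ} (p : n.Partition) : YoungDiagram :=
  YoungDiagram.ofRowLens (partList p) (partList_sorted p)

lemma ptCells_eq (w : List ℕ) (hw : w.SortedGE) :
    ptCells w = (YoungDiagram.ofRowLens w hw).cells := by
  ext c
  rw [YoungDiagram.mem_cells, YoungDiagram.mem_ofRowLens]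
  simp only [ptCells, Finset.mem_biUnion, Finset.mem_range, Finset.mem_product,
    Finset.mem_singleton]
  constructor
  · rintro ⟨i, hi, hc1, hc2⟩
    subst hc1
    refine ⟨hi, ?_⟩
    rwa [← List.getD_eq_getElem w 0 hi]
  · rintro ⟨h, hc2⟩
    refine ⟨c.1, h, rfl, ?_⟩
    rwa [List.getD_eq_getElem w 0 h]

lemma sum_getD (l : List ℕ) : ∑ i ∈ Finset.range l.length, l.getD i 0 = l.sum := by
  induction l with
  | nil => simp
  | cons a l ih =>
    rw [List.length_cons, Finset.sum_range_succ']
    simp only [List.getD_cons_succ, List.getD_cons_zero]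
    rw [ih, List.sum_cons, add_comm]

lemma ptCells_card (l : List ℕ) : (ptCells l).card = l.sum := by
  rw [ptCells, Finset.card_biUnion]
  · rw [← sum_getD l]
    apply Finset.sum_congr rfl
    intro i _
    rw [Finset.card_product, Finset.card_singleton, Finset.card_range, one_mul]
  · intro i _ j _ hij
    rw [Function.onFun_apply, Finset.disjoint_left]
    intro c hc hc'
    rw [Finset.mem_product, Finset.mem_singleton] at hc hc'
    exact hij (hc.1.symm.trans hc'.1)

lemma pdiag_cells {n : ℕ} (p : n.Partition) :
    (pdiag p).cells = ptCells (partList p) := (ptCells_eq _ _).symm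

lemma pdiag_card {n : ℕ} (p : n.Partition) : (pdiag p).cells.card = n := by
  rw [pdiag_cells, ptCells_card, partList_sum]

lemma pdiag_injective {n : ℕ} : Function.Injective (pdiag (n := n)) := by
  intro p q h
  apply Nat.Partition.ext
  have hp : (pdiag p).rowLens = partList p :=
    YoungDiagram.rowLens_ofRowLens_eq_self (partList_pos p)
  have hq : (pdiag q).rowLens = partList q :=
    YoungDiagram.rowLens_ofRowLens_eq_self (partList_pos q)
  have hpq : partList p = partList q := by rw [← hp, ← hq, h]
  calc p.parts = ↑(partList p) := (partList_coe p).symm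
    _ = ↑(partList q) := by rw [hpq]
    _ = q.parts := partList_coe q

lemma pdiag_surjective {n : ℕ} (γ : YoungDiagram) (hγ : γ.cells.card = n) :
    ∃ p : n.Partition, pdiag p = γ := by
  have hcells : γ.cells = ptCells γ.rowLens := by
    have hc : (YoungDiagram.ofRowLens γ.rowLens γ.rowLens_sorted).cells = ptCells γ.rowLens :=
      (ptCells_eq _ _).symm
    rw [YoungDiagram.ofRowLens_to_rowLens_eq_self] at hc
    exact hc
  have hsum : γ.rowLens.sum = n := by
    rw [← hγ, hcells, ptCells_card]
  refine ⟨⟨↑γ.rowLens, ?_, ?_⟩, ?_⟩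
  · intro i hi
    exact γ.pos_of_mem_rowLens i (Multiset.mem_coe.mp hi)
  · rw [Multiset.sum_coe, hsum]
  · -- partList of this partition is γ.rowLens
    have hsort : Multiset.sort (↑γ.rowLens : Multiset ℕ) (· ≥ ·) = γ.rowLens := by
      refine List.Perm.eq_of_pairwise' (r := (· ≥ ·))
        (Multiset.pairwise_sort _ _) γ.rowLens_sorted.pairwise
        (Multiset.coe_eq_coe.mp (Multiset.sort_eq _ _))
    apply YoungDiagram.ext
    rw [pdiag_cells, hcells]
    show ptCells (partList _) = _
    unfold partList
    show ptCells (Multiset.sort (↑γ.rowLens : Multiset ℕ) (· ≥ ·)) = _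
    rw [hsort]

end Partitions

lemma sytCount_eq_tabsOn (l : List ℕ) :
    sytCount l = Nat.card (TabsOn (ptCells l) l.sum) := rfl

lemma sytCount_eq_pathCount {n : ℕ} (p : n.Partition) :
    sytCount (partList p) = pathCount (List.replicate n true) ⊥ (pdiag p) := by
  rw [sytCount_eq_tabsOn,
    tabsOn_congr (ptCells_eq _ (partList_sorted p)) (partList_sum p)]
  show Nat.card (TabsOn (pdiag p).cells n) = _
  exact tab_count n (pdiag p) (pdiag_card p)

end RSK

/-- RSK identity: `∑_{λ ⊢ n} (f^λ)² = n!`. -/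
theorem sum_sq_sytCount (n : ℕ) :
    ∑ μ : Nat.Partition n, (sytCount (partList μ)) ^ 2 = Nat.factorial n := by
  classical
  set T : Finset YoungDiagram :=
    Finset.univ.image (fun p : Nat.Partition n => RSK.pdiag p) with hTdef
  have hT : ∀ γ, RSK.pathCount (List.replicate n true) ⊥ γ ≠ 0 → γ ∈ T := by
    intro γ hγ
    have hc := RSK.pathCount_true_card n γ hγ
    obtain ⟨p, hp⟩ := RSK.pdiag_surjective γ hc
    rw [hTdef]
    exact Finset.mem_image.mpr ⟨p, Finset.mem_univ _, hp⟩
  have hmain := RSK.pathCount_factorial n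
  rw [RSK.pathCount_append_sum (List.replicate n true) (List.replicate n false) ⊥ ⊥ T hT]
    at hmain
  rw [← hmain, hTdef, Finset.sum_image (fun p _ q _ h => RSK.pdiag_injective h)]
  apply Finset.sum_congr rfl
  intro p _
  rw [RSK.sytCount_eq_pathCount p, RSK.down_up_count n (RSK.pdiag p), sq]
end

section
/- The hook length formula holds: for any partition λ of n, the number of standard Young tableaux of shape λ equals n! divided by the product over all cells u of λ of the hook length h(u). -/
open scoped BigOperators

/-- The hook length of cell `c = (i,j)`: 1 + the number of cells strictly to the right
in row `i` + the number of cells strictly below in column `j`. -/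
def hookLen (l : List ℕ) (c : ℕ × ℕ) : ℕ :=
  (l.getD c.1 0 - c.2 - 1) +
    ((Finset.range l.length).filter fun i => c.1 < i ∧ c.2 < l.getD i 0).card + 1

def Mono (l : List ℕ) : Prop := ∀ i j : ℕ, i ≤ j → l.getD j 0 ≤ l.getD i 0

def beta (l : List ℕ) (i : ℕ) : ℕ := l.getD i 0 + (l.length - 1 - i)

def cor (l : List ℕ) : Finset ℕ :=
  (Finset.range l.length).filter fun i => l.getD (i + 1) 0 < l.getD i 0

def rmc (l : List ℕ) (i : ℕ) : List ℕ := l.set i (l.getD i 0 - 1)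

theorem mem_ptCells {l : List ℕ} {c : ℕ × ℕ} :
    c ∈ ptCells l ↔ c.1 < l.length ∧ c.2 < l.getD c.1 0 := by
  obtain ⟨a, b⟩ := c
  simp only [ptCells, Finset.mem_biUnion, Finset.mem_range, Finset.mem_product,
    Finset.mem_singleton]
  constructor
  · rintro ⟨i, hi, rfl, hb⟩; exact ⟨hi, hb⟩
  · rintro ⟨ha, hb⟩; exact ⟨a, ha, rfl, hb⟩

theorem sum_eq_sum_getD (l : List ℕ) :
    l.sum = ∑ i ∈ Finset.range l.length, l.getD i 0 := by
  induction l with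
  | nil => simp
  | cons a t ih =>
    rw [List.sum_cons, List.length_cons, Finset.sum_range_succ', ih]
    simp [add_comm]

theorem card_ptCells (l : List ℕ) : (ptCells l).card = l.sum := by
  rw [ptCells, Finset.card_biUnion, sum_eq_sum_getD]
  · refine Finset.sum_congr rfl fun i _ => ?_
    simp
  · intro i _ j _ hij
    simp only [Finset.disjoint_left]
    rintro ⟨a, b⟩ h1 h2
    simp only [Finset.mem_product, Finset.mem_singleton] at h1 h2
    exact hij (h1.1.symm.trans h2.1)

theorem length_rmc (l : List ℕ) (i : ℕ) : (rmc l i).length = l.length := by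
  simp [rmc]

theorem getD_rmc (l : List ℕ) {i : ℕ} (hi : i < l.length) (j : ℕ) :
    (rmc l i).getD j 0 = if j = i then l.getD i 0 - 1 else l.getD j 0 := by
  by_cases hij : j = i
  · subst hij
    rw [if_pos rfl, List.getD_eq_getElem _ _ (show j < (rmc l j).length by simpa [rmc] using hi)]
    simp [rmc, List.getElem_set, List.getD_eq_getElem _ _ hi]
  · rw [if_neg hij]
    rcases lt_or_ge j l.length with hj | hj
    · rw [List.getD_eq_getElem _ _ (show j < (rmc l i).length by simpa [rmc] using hj),
        List.getD_eq_getElem _ _ hj]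
      simp [rmc, List.getElem_set, Ne.symm hij]
    · rw [List.getD_eq_default _ _ (by simpa [rmc] using hj), List.getD_eq_default _ _ hj]

theorem mem_cor {l : List ℕ} {i : ℕ} :
    i ∈ cor l ↔ i < l.length ∧ l.getD (i + 1) 0 < l.getD i 0 := by
  simp [cor]

theorem mono_rmc {l : List ℕ} (h : Mono l) {i : ℕ} (hi : i ∈ cor l) : Mono (rmc l i) := by
  rw [mem_cor] at hi
  intro a b hab
  rw [getD_rmc l hi.1, getD_rmc l hi.1]
  split
  · next hb =>
    subst hb
    split
    · next ha => omega
    · next ha =>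
      have : a < b := by omega
      have := h a b hab
      omega
  · next hb =>
    split
    · next ha =>
      subst ha
      have : a + 1 ≤ b := by omega
      have := h (a+1) b this
      omega
    · next ha => exact h a b hab

theorem ptCells_rmc {l : List ℕ} {i : ℕ} (hi : i ∈ cor l) :
    ptCells (rmc l i) = (ptCells l).erase (i, l.getD i 0 - 1) := by
  rw [mem_cor] at hi
  ext ⟨a, b⟩
  rw [Finset.mem_erase, mem_ptCells, mem_ptCells, length_rmc]
  dsimp only
  rw [getD_rmc l hi.1]
  constructor
  · rintro ⟨ha, hb⟩
    by_cases hai : a = i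
    · subst hai
      rw [if_pos rfl] at hb
      refine ⟨?_, ha, by omega⟩
      simp only [Ne, Prod.mk.injEq, true_and]
      omega
    · rw [if_neg hai] at hb
      exact ⟨fun he => hai (congrArg Prod.fst he), ha, hb⟩
  · rintro ⟨hne, ha, hb⟩
    refine ⟨ha, ?_⟩
    by_cases hai : a = i
    · subst hai
      rw [if_pos rfl]
      simp only [Ne, Prod.mk.injEq, true_and] at hne
      omega
    · rwa [if_neg hai]

theorem corner_mem_ptCells {l : List ℕ} {i : ℕ} (hi : i ∈ cor l) :
    (i, l.getD i 0 - 1) ∈ ptCells l := by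
  rw [mem_cor] at hi
  refine mem_ptCells.2 ?_
  dsimp only
  exact ⟨hi.1, by omega⟩

theorem sum_rmc {l : List ℕ} {i : ℕ} (hi : i ∈ cor l) :
    (rmc l i).sum + 1 = l.sum := by
  have h1 := card_ptCells (rmc l i)
  have h2 := card_ptCells l
  have hmem := corner_mem_ptCells hi
  rw [← h1, ← h2, ptCells_rmc hi, Finset.card_erase_of_mem hmem]
  have : 0 < (ptCells l).card := Finset.card_pos.2 ⟨_, hmem⟩
  omega

theorem beta_strict_anti {l : List ℕ} (h : Mono l) {i j : ℕ} (hij : i < j)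
    (hj : j < l.length) : beta l j < beta l i := by
  have := h i j (le_of_lt hij)
  unfold beta
  omega

/-- The `hookLen` of `(i,j)` in additive form. -/
theorem hook_eq {l : List ℕ} {i j : ℕ} (hj : j < l.getD i 0) :
    hookLen l (i, j) + j = l.getD i 0 +
      ((Finset.range l.length).filter fun r => i < r ∧ j < l.getD r 0).card := by
  unfold hookLen
  dsimp only
  omega

/-- Relation between the global column count and the partial one. -/
theorem col_eq {l : List ℕ} (h : Mono l) {i j : ℕ} (hi : i < l.length)
    (hj : j < l.getD i 0) :
    ((Finset.range l.length).filter fun r => j < l.getD r 0).card =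
      i + 1 + ((Finset.range l.length).filter fun r => i < r ∧ j < l.getD r 0).card := by
  have hsplit : (Finset.range l.length).filter (fun r => j < l.getD r 0) =
      Finset.range (i + 1) ∪ (Finset.range l.length).filter fun r => i < r ∧ j < l.getD r 0 := by
    ext r
    simp only [Finset.mem_filter, Finset.mem_range, Finset.mem_union]
    constructor
    · rintro ⟨hr, hjr⟩
      rcases Nat.lt_or_ge r (i + 1) with h1 | h1
      · exact Or.inl h1
      · exact Or.inr ⟨hr, by omega, hjr⟩
    · rintro (h1 | ⟨h1, h2, h3⟩)
      · have := h r i (by omega)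
        exact ⟨by omega, by omega⟩
      · exact ⟨h1, h3⟩
  rw [hsplit, Finset.card_union_of_disjoint, Finset.card_range]
  simp only [Finset.disjoint_left, Finset.mem_range, Finset.mem_filter]
  rintro r hr ⟨-, hir, -⟩
  omega

/-- Hooks in a row avoid the beta-number gaps. -/
theorem hook_ne_gap {l : List ℕ} (h : Mono l) {i i' j : ℕ} (hii' : i < i')
    (hi' : i' < l.length) (hj : j < l.getD i 0) :
    hookLen l (i, j) ≠ beta l i - beta l i' := by
  have hi : i < l.length := lt_trans hii' hi'
  have hE1 := hook_eq (l := l) (i := i) (j := j) hj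
  have hE2 := col_eq h hi hj
  have hba := beta_strict_anti h hii' hi'
  have hbi : beta l i = l.getD i 0 + (l.length - 1 - i) := rfl
  have hbi' : beta l i' = l.getD i' 0 + (l.length - 1 - i') := rfl
  rcases Nat.lt_or_ge j (l.getD i' 0) with hcase | hcase
  · -- column of j reaches row i' : col ≥ i' + 1
    have hcol : i' + 1 ≤ ((Finset.range l.length).filter fun r => j < l.getD r 0).card := by
      have hsub : Finset.range (i' + 1) ⊆
          (Finset.range l.length).filter fun r => j < l.getD r 0 := by
        intro r hr
        rw [Finset.mem_range] at hr
        rw [Finset.mem_filter, Finset.mem_range]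
        have := h r i' (by omega)
        exact ⟨by omega, by omega⟩
      have := Finset.card_le_card hsub
      rwa [Finset.card_range] at this
    omega
  · -- column of j stops before row i' : col ≤ i'
    have hcol : ((Finset.range l.length).filter fun r => j < l.getD r 0).card ≤ i' := by
      have hsub : (Finset.range l.length).filter (fun r => j < l.getD r 0) ⊆
          Finset.range i' := by
        intro r hr
        rw [Finset.mem_filter, Finset.mem_range] at hr
        rw [Finset.mem_range]
        by_contra hge
        have := h i' r (by omega)
        omega
      have := Finset.card_le_card hsub
      rwa [Finset.card_range] at this
    omega

/-- Hooks strictly decrease along a row. -/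
theorem hook_row_strict {l : List ℕ} {i j1 j2 : ℕ} (hjj : j1 < j2) (hj2 : j2 < l.getD i 0) :
    hookLen l (i, j2) < hookLen l (i, j1) := by
  have hE1 := hook_eq (l := l) (i := i) (j := j1) (by omega)
  have hE2 := hook_eq (l := l) (i := i) (j := j2) hj2
  have hsub : (Finset.range l.length).filter (fun r => i < r ∧ j2 < l.getD r 0) ⊆
      (Finset.range l.length).filter fun r => i < r ∧ j1 < l.getD r 0 := by
    intro r hr
    rw [Finset.mem_filter] at hr ⊢
    exact ⟨hr.1, hr.2.1, by omega⟩
  have := Finset.card_le_card hsub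
  omega

theorem hook_le_beta {l : List ℕ} {i j : ℕ} (hi : i < l.length) (hj : j < l.getD i 0) :
    hookLen l (i, j) ≤ beta l i := by
  have hE1 := hook_eq (l := l) (i := i) (j := j) hj
  have hsub : (Finset.range l.length).filter (fun r => i < r ∧ j < l.getD r 0) ⊆
      Finset.Ioo i l.length := by
    intro r hr
    rw [Finset.mem_filter, Finset.mem_range] at hr
    rw [Finset.mem_Ioo]
    exact ⟨hr.2.1, hr.1⟩
  have hcard := Finset.card_le_card hsub
  rw [Nat.card_Ioo] at hcard
  have hbi : beta l i = l.getD i 0 + (l.length - 1 - i) := rfl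
  omega

theorem hook_pos (l : List ℕ) (c : ℕ × ℕ) : 0 < hookLen l c := by
  unfold hookLen; omega

/-- The row version of the hook product formula. -/
theorem row_prod {l : List ℕ} (h : Mono l) {i : ℕ} (hi : i < l.length) :
    (∏ j ∈ Finset.range (l.getD i 0), hookLen l (i, j)) *
        (∏ j ∈ Finset.Ioo i l.length, (beta l i - beta l j))
      = Nat.factorial (beta l i) := by
  set A : Finset ℕ := (Finset.range (l.getD i 0)).image fun j => hookLen l (i, j) with hA
  set B : Finset ℕ := (Finset.Ioo i l.length).image fun j => beta l i - beta l j with hB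
  have hinjA : Set.InjOn (fun j => hookLen l (i, j)) (Finset.range (l.getD i 0)) := by
    intro a ha b hb hab
    rw [Finset.coe_range, Set.mem_Iio] at ha hb
    by_contra hne
    rcases Nat.lt_or_ge a b with hlt | hge
    · exact absurd hab (Nat.ne_of_gt (hook_row_strict hlt hb))
    · exact absurd hab.symm (Nat.ne_of_gt (hook_row_strict (by omega) ha))
  have hinjB : Set.InjOn (fun j => beta l i - beta l j) (Finset.Ioo i l.length) := by
    intro a ha b hb hab
    dsimp only at hab
    rw [Finset.coe_Ioo, Set.mem_Ioo] at ha hb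
    have h1 := beta_strict_anti h ha.1 ha.2
    have h2 := beta_strict_anti h hb.1 hb.2
    by_contra hne
    rcases Nat.lt_or_ge a b with hlt | hge
    · have := beta_strict_anti h hlt hb.2
      omega
    · have := beta_strict_anti h (show b < a by omega) ha.2
      omega
  have hdisj : Disjoint A B := by
    rw [Finset.disjoint_left]
    rintro x hx hx'
    rw [hA, Finset.mem_image] at hx
    rw [hB, Finset.mem_image] at hx'
    obtain ⟨j, hj, rfl⟩ := hx
    obtain ⟨i', hi', he⟩ := hx'
    rw [Finset.mem_range] at hj
    rw [Finset.mem_Ioo] at hi'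
    exact hook_ne_gap h hi'.1 hi'.2 hj he.symm
  have hcardA : A.card = l.getD i 0 := by
    rw [hA, Finset.card_image_of_injOn hinjA, Finset.card_range]
  have hcardB : B.card = l.length - i - 1 := by
    rw [hB, Finset.card_image_of_injOn hinjB, Nat.card_Ioo]
  have hsubset : A ∪ B ⊆ Finset.Icc 1 (beta l i) := by
    intro x hx
    rw [Finset.mem_union] at hx
    rw [Finset.mem_Icc]
    rcases hx with hx | hx
    · rw [hA, Finset.mem_image] at hx
      obtain ⟨j, hj, rfl⟩ := hx
      rw [Finset.mem_range] at hj
      exact ⟨hook_pos l (i, j), hook_le_beta hi hj⟩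
    · rw [hB, Finset.mem_image] at hx
      obtain ⟨j, hj, rfl⟩ := hx
      rw [Finset.mem_Ioo] at hj
      have := beta_strict_anti h hj.1 hj.2
      omega
  have hU : A ∪ B = Finset.Icc 1 (beta l i) := by
    apply Finset.eq_of_subset_of_card_le hsubset
    rw [Finset.card_union_of_disjoint hdisj, hcardA, hcardB, Nat.card_Icc]
    have hbi : beta l i = l.getD i 0 + (l.length - 1 - i) := rfl
    omega
  have hPA : ∏ j ∈ Finset.range (l.getD i 0), hookLen l (i, j) = ∏ x ∈ A, x := by
    rw [hA, Finset.prod_image hinjA]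
  have hPB : ∏ j ∈ Finset.Ioo i l.length, (beta l i - beta l j) = ∏ x ∈ B, x := by
    rw [hB, Finset.prod_image hinjB]
  rw [hPA, hPB, ← Finset.prod_union hdisj, hU]
  rw [show Finset.Icc 1 (beta l i) = Finset.Ico 1 (beta l i + 1) from (Finset.Ico_add_one_right_eq_Icc _ _).symm]
  exact Finset.prod_Ico_id_eq_factorial _

theorem prod_ptCells_eq {l : List ℕ} (f : ℕ × ℕ → ℕ) :
    ∏ c ∈ ptCells l, f c =
      ∏ i ∈ Finset.range l.length, ∏ j ∈ Finset.range (l.getD i 0), f (i, j) := by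
  rw [ptCells, Finset.prod_biUnion]
  · refine Finset.prod_congr rfl fun i _ => ?_
    rw [Finset.singleton_product, Finset.prod_map]
    rfl
  · intro i _ j _ hij
    simp only [Function.onFun, Finset.disjoint_left]
    rintro ⟨a, b⟩ h1 h2
    simp only [Finset.mem_product, Finset.mem_singleton] at h1 h2
    exact hij (h1.1.symm.trans h2.1)

theorem hook_prod_beta {l : List ℕ} (h : Mono l) :
    (∏ c ∈ ptCells l, hookLen l c) *
        ∏ i ∈ Finset.range l.length, ∏ j ∈ Finset.Ioo i l.length, (beta l i - beta l j)
      = ∏ i ∈ Finset.range l.length, Nat.factorial (beta l i) := by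
  rw [prod_ptCells_eq, ← Finset.prod_mul_distrib]
  exact Finset.prod_congr rfl fun i hi => row_prod h (Finset.mem_range.1 hi)

section KeyId
open Polynomial Finset

private noncomputable def Pp (f : ℕ → ℚ) (s : Finset ℕ) : ℚ[X] := ∏ i ∈ s, (X - C (f i))

private lemma Pp_monic (f : ℕ → ℚ) (s : Finset ℕ) : (Pp f s).Monic :=
  monic_prod_of_monic _ _ fun _ _ => monic_X_sub_C _

private lemma Pp_degree (f : ℕ → ℚ) (s : Finset ℕ) : (Pp f s).degree = s.card := by
  rw [Pp, degree_prod]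
  simp [degree_X_sub_C]

private lemma Pp_natDegree (f : ℕ → ℚ) (s : Finset ℕ) : (Pp f s).natDegree = s.card :=
  natDegree_eq_of_degree_eq_some (Pp_degree f s)

private lemma Pp_coeff_card (f : ℕ → ℚ) (s : Finset ℕ) : (Pp f s).coeff s.card = 1 := by
  have := (Pp_monic f s).coeff_natDegree
  rwa [Pp_natDegree] at this

private lemma Pp_coeff1 (f : ℕ → ℚ) (s : Finset ℕ) :
    ∀ m : ℕ, s.card = m + 1 → (Pp f s).coeff m = -∑ i ∈ s, f i := by
  induction s using Finset.induction_on with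
  | empty => intro m hm; simp at hm
  | insert a t ha ih =>
    intro m hm
    rw [card_insert_of_notMem ha] at hm
    have hmt : m = t.card := by omega
    subst hmt
    rw [Pp, Finset.prod_insert ha, ← Pp, sub_mul, X_mul]
    rcases Nat.eq_zero_or_pos t.card with h0 | hpos
    · rw [Finset.card_eq_zero] at h0
      subst h0
      simp [Pp]
    · obtain ⟨m', hm'⟩ : ∃ m', t.card = m' + 1 := ⟨t.card - 1, by omega⟩
      rw [coeff_sub, hm', coeff_mul_X, ← hm', coeff_C_mul, Pp_coeff_card,
        ih m' hm', sum_insert ha]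
      ring

private lemma Pp_coeff2 (f : ℕ → ℚ) (s : Finset ℕ) :
    ∀ m : ℕ, s.card = m + 2 →
      (Pp f s).coeff m = ((∑ i ∈ s, f i) ^ 2 - ∑ i ∈ s, (f i) ^ 2) / 2 := by
  induction s using Finset.induction_on with
  | empty => intro m hm; simp at hm
  | insert a t ha ih =>
    intro m hm
    rw [card_insert_of_notMem ha] at hm
    have hmt : t.card = m + 1 := by omega
    rw [Pp, Finset.prod_insert ha, ← Pp, sub_mul, X_mul]
    rcases Nat.eq_zero_or_pos m with h0 | hpos
    · subst h0
      rw [coeff_sub, coeff_C_mul, Pp_coeff1 f t 0 hmt]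
      obtain ⟨x, hx⟩ := Finset.card_eq_one.1 hmt
      subst hx
      simp only [Pp, prod_singleton, sum_insert ha, sum_singleton]
      simp [coeff_C_mul, mul_comm]
      ring
    · obtain ⟨m', hm'⟩ : ∃ m', m = m' + 1 := ⟨m - 1, by omega⟩
      rw [coeff_sub, hm', coeff_mul_X, coeff_C_mul, ← hm',
        Pp_coeff1 f t m hmt, ih m' (by omega), sum_insert ha, sum_insert ha]
      ring

theorem key_identity (k : ℕ) (b : ℕ → ℚ)
    (hinj : ∀ i < k, ∀ j < k, i ≠ j → b i ≠ b j) :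
    ∑ i ∈ Finset.range k, b i * ∏ j ∈ (Finset.range k).erase i,
        ((b i - b j - 1) / (b i - b j))
      = (∑ i ∈ Finset.range k, b i) - (k * (k - 1) : ℚ) / 2 := by
  rcases Nat.lt_or_ge k 2 with hk | hk
  · interval_cases k
    · simp
    · simp
  -- abbreviations
  set S : ℚ := ∑ i ∈ Finset.range k, b i with hS
  set Cc : ℕ → ℚ := fun i => ∏ j ∈ (Finset.range k).erase i, ((b i - b j - 1) / (b i - b j))
    with hCc
  show ∑ i ∈ Finset.range k, b i * Cc i = S - (k * (k - 1) : ℚ) / 2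
  have hbne : ∀ i ∈ Finset.range k, ∀ j ∈ (Finset.range k).erase i, b i - b j ≠ 0 := by
    intro i hi j hj
    rw [mem_erase] at hj
    rw [mem_range] at *
    have := hinj i hi j hj.2 (Ne.symm hj.1)
    intro h
    exact this (by linarith [sub_eq_zero.1 h])
  -- the polynomial identity
  have hR : Pp (fun j => b j + 1) (Finset.range k) - Pp b (Finset.range k)
      + ∑ i ∈ Finset.range k, C (Cc i) * Pp b ((Finset.range k).erase i) = 0 := by
    set R := Pp (fun j => b j + 1) (Finset.range k) - Pp b (Finset.range k)
      + ∑ i ∈ Finset.range k, C (Cc i) * Pp b ((Finset.range k).erase i) with hRdef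
    by_cases hR0 : R = 0
    · exact hR0
    have hdeg : R.degree < ((k : ℕ) : WithBot ℕ) := by
      apply lt_of_le_of_lt (degree_add_le _ _)
      apply max_lt
      · have h := degree_sub_lt (p := Pp (fun j => b j + 1) (Finset.range k))
          (q := Pp b (Finset.range k)) (by rw [Pp_degree, Pp_degree]) (Pp_monic _ _).ne_zero
          (by rw [(Pp_monic _ _).leadingCoeff, (Pp_monic _ _).leadingCoeff])
        rwa [Pp_degree, card_range] at h
      · apply lt_of_le_of_lt (degree_sum_le _ _)
        rw [Finset.sup_lt_iff (show (⊥ : WithBot ℕ) < (k : ℕ) from WithBot.bot_lt_coe k)]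
        intro i hi
        apply lt_of_le_of_lt (degree_mul_le _ _)
        have h1 : (C (Cc i)).degree ≤ 0 := degree_C_le
        have h2 : (Pp b ((Finset.range k).erase i)).degree = ((Finset.range k).erase i).card :=
          Pp_degree _ _
        rw [card_erase_of_mem hi, card_range] at h2
        calc (C (Cc i)).degree + (Pp b ((Finset.range k).erase i)).degree
            ≤ 0 + ((k - 1 : ℕ) : WithBot ℕ) := add_le_add h1 (le_of_eq h2)
          _ = ((k - 1 : ℕ) : WithBot ℕ) := zero_add _
          _ < ((k : ℕ) : WithBot ℕ) := by
              exact_mod_cast Nat.sub_lt (by omega) one_pos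
    apply eq_zero_of_natDegree_lt_card_of_eval_eq_zero' R ((Finset.range k).image b)
    · intro x hx
      rw [mem_image] at hx
      obtain ⟨m, hm, rfl⟩ := hx
      have hQ : (Pp b (Finset.range k)).eval (b m) = 0 := by
        rw [Pp, eval_prod]
        apply Finset.prod_eq_zero hm
        simp
      have hQi : ∀ i ∈ Finset.range k, i ≠ m →
          (Pp b ((Finset.range k).erase i)).eval (b m) = 0 := by
        intro i _ him
        rw [Pp, eval_prod]
        apply Finset.prod_eq_zero (mem_erase.2 ⟨Ne.symm him, hm⟩)
        simp
      have hP : (Pp (fun j => b j + 1) (Finset.range k)).eval (b m)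
          = -∏ j ∈ (Finset.range k).erase m, (b m - b j - 1) := by
        rw [Pp, eval_prod, ← Finset.mul_prod_erase _ _ hm]
        simp only [eval_sub, eval_X, eval_C]
        rw [show b m - (b m + 1) = -1 by ring]
        rw [neg_one_mul]
        congr 1
        exact Finset.prod_congr rfl fun j _ => by ring
      have hCm : Cc m * (Pp b ((Finset.range k).erase m)).eval (b m)
          = ∏ j ∈ (Finset.range k).erase m, (b m - b j - 1) := by
        rw [Pp, eval_prod, hCc]
        simp only [eval_sub, eval_X, eval_C]
        rw [← Finset.prod_mul_distrib]
        exact Finset.prod_congr rfl fun j hj => div_mul_cancel₀ _ (hbne m hm j hj)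
      rw [hRdef]
      simp only [eval_add, eval_sub, eval_finset_sum, eval_mul, eval_C]
      rw [hP, hQ, Finset.sum_eq_single m (fun i hi him => by rw [hQi i hi him, mul_zero])
        (fun h => absurd hm h), hCm]
      ring
    · rw [Finset.card_image_of_injOn]
      · rw [card_range]
        exact (natDegree_lt_iff_degree_lt hR0).2 hdeg
      · intro i hi j hj hij
        by_contra hne
        exact hinj i (mem_range.1 hi) j (mem_range.1 hj) hne hij
  -- coefficient at k-1
  have hco1 : ∑ i ∈ Finset.range k, Cc i = k := by
    have := congrArg (fun p => p.coeff (k - 1)) hR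
    simp only [coeff_add, coeff_sub, coeff_zero, finset_sum_coeff, coeff_C_mul] at this
    rw [Pp_coeff1 _ _ (k-1) (by rw [card_range]; omega),
      Pp_coeff1 _ _ (k-1) (by rw [card_range]; omega)] at this
    have hQi : ∀ i ∈ Finset.range k,
        (Pp b ((Finset.range k).erase i)).coeff (k - 1) = 1 := by
      intro i hi
      have := Pp_coeff_card b ((Finset.range k).erase i)
      rwa [card_erase_of_mem hi, card_range] at this
    have hrepl : ∑ x ∈ Finset.range k, Cc x * (Pp b ((Finset.range k).erase x)).coeff (k - 1)
        = ∑ x ∈ Finset.range k, Cc x :=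
      Finset.sum_congr rfl fun i hi => by rw [hQi i hi, mul_one]
    have hsum : ∑ i ∈ Finset.range k, (b i + 1) = S + k := by
      rw [Finset.sum_add_distrib, sum_const, card_range, nsmul_eq_mul, mul_one]
    rw [hrepl, hsum, ← hS] at this
    linarith
  -- coefficient at k-2
  have hco2 : ∑ i ∈ Finset.range k, Cc i * (S - b i)
      = (k - 1) * S + (k * (k - 1) : ℚ) / 2 := by
    have := congrArg (fun p => p.coeff (k - 2)) hR
    simp only [coeff_add, coeff_sub, coeff_zero, finset_sum_coeff, coeff_C_mul] at this
    rw [Pp_coeff2 _ _ (k-2) (by rw [card_range]; omega),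
      Pp_coeff2 _ _ (k-2) (by rw [card_range]; omega)] at this
    have hQi : ∀ i ∈ Finset.range k,
        (Pp b ((Finset.range k).erase i)).coeff (k - 2) = -(S - b i) := by
      intro i hi
      rw [Pp_coeff1 b _ (k-2) (by rw [card_erase_of_mem hi, card_range]; omega)]
      rw [← Finset.add_sum_erase _ _ hi] at hS
      rw [hS]
      ring
    have hrepl : ∑ x ∈ Finset.range k, Cc x * (Pp b ((Finset.range k).erase x)).coeff (k - 2)
        = -(∑ x ∈ Finset.range k, Cc x * (S - b x)) := by
      rw [← Finset.sum_neg_distrib]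
      exact Finset.sum_congr rfl fun i hi => by rw [hQi i hi]; ring
    have hsum : ∑ i ∈ Finset.range k, (b i + 1) = S + k := by
      rw [Finset.sum_add_distrib, sum_const, card_range, nsmul_eq_mul, mul_one]
    have hsq : ∑ i ∈ Finset.range k, (b i + 1) ^ 2
        = (∑ i ∈ Finset.range k, (b i) ^ 2) + 2 * S + k := by
      have h3 : ∀ i, (b i + 1)^2 = (b i)^2 + 2 * b i + 1 := fun i => by ring
      rw [Finset.sum_congr rfl fun i _ => h3 i, Finset.sum_add_distrib,
        Finset.sum_add_distrib, ← Finset.mul_sum, sum_const, card_range,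
        nsmul_eq_mul, mul_one, ← hS]
    rw [hrepl, hsum, hsq, ← hS] at this
    linear_combination -this
  -- combine
  have hexp2 : ∑ i ∈ Finset.range k, Cc i * (S - b i)
      = S * (∑ i ∈ Finset.range k, Cc i) - ∑ i ∈ Finset.range k, b i * Cc i := by
    rw [Finset.mul_sum, ← Finset.sum_sub_distrib]
    exact Finset.sum_congr rfl fun i _ => by ring
  rw [hexp2, hco1] at hco2
  linarith

end KeyId

section Dratio
open Finset

theorem Dsplit (f : ℕ → ℚ) (i k : ℕ) (hik : i < k) :
    ∏ a ∈ range k, ∏ c ∈ Ioo a k, (f a - f c)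
      = ((∏ c ∈ Ioo i k, (f i - f c)) * ∏ a ∈ range i, (f a - f i)) *
        ∏ a ∈ (range k).erase i, ∏ c ∈ (Ioo a k).erase i, (f a - f c) := by
  rw [← Finset.mul_prod_erase (range k) _ (mem_range.2 hik)]
  have hin : ∀ a ∈ (range k).erase i,
      ∏ c ∈ Ioo a k, (f a - f c)
        = (if a < i then f a - f i else 1) * ∏ c ∈ (Ioo a k).erase i, (f a - f c) := by
    intro a ha
    rw [mem_erase, mem_range] at ha
    by_cases hai : a < i
    · rw [if_pos hai]
      exact (Finset.mul_prod_erase _ _ (mem_Ioo.2 ⟨hai, hik⟩)).symm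
    · rw [if_neg hai, one_mul, Finset.erase_eq_of_notMem]
      rw [mem_Ioo]
      omega
  rw [Finset.prod_congr rfl hin, Finset.prod_mul_distrib]
  have hsub : range i ⊆ (range k).erase i := by
    intro a ha
    rw [mem_range] at ha
    rw [mem_erase, mem_range]
    omega
  have h1 : ∏ a ∈ (range k).erase i, (if a < i then f a - f i else 1)
      = ∏ a ∈ range i, (f a - f i) := by
    rw [← Finset.prod_subset hsub fun x _ hnx => if_neg fun hlt => hnx (mem_range.2 hlt)]
    exact Finset.prod_congr rfl fun a ha => if_pos (mem_range.1 ha)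
  rw [h1]
  ring

theorem Dratio (f g : ℕ → ℚ) (i k : ℕ) (hik : i < k) (hfg : ∀ j, j ≠ i → f j = g j) :
    (∏ a ∈ range k, ∏ c ∈ Ioo a k, (g a - g c)) * ∏ j ∈ (range k).erase i, (f i - f j)
      = (∏ a ∈ range k, ∏ c ∈ Ioo a k, (f a - f c)) * ∏ j ∈ (range k).erase i, (g i - g j) := by
  have herase : (range k).erase i = range i ∪ Ioo i k := by
    ext a
    rw [mem_erase, mem_range, mem_union, mem_range, mem_Ioo]
    omega
  have hdisj : Disjoint (range i) (Ioo i k) := by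
    rw [Finset.disjoint_left]
    intro a ha ha'
    rw [mem_range] at ha
    rw [mem_Ioo] at ha'
    omega
  have hsplitf : ∏ j ∈ (range k).erase i, (f i - f j)
      = (∏ j ∈ range i, (f i - f j)) * ∏ j ∈ Ioo i k, (f i - f j) := by
    rw [herase, Finset.prod_union hdisj]
  have hsplitg : ∏ j ∈ (range k).erase i, (g i - g j)
      = (∏ j ∈ range i, (g i - g j)) * ∏ j ∈ Ioo i k, (g i - g j) := by
    rw [herase, Finset.prod_union hdisj]
  rw [Dsplit f i k hik, Dsplit g i k hik, hsplitf, hsplitg]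
  have hR : ∏ a ∈ (range k).erase i, ∏ c ∈ (Ioo a k).erase i, (g a - g c)
      = ∏ a ∈ (range k).erase i, ∏ c ∈ (Ioo a k).erase i, (f a - f c) := by
    refine Finset.prod_congr rfl fun a ha => Finset.prod_congr rfl fun c hc => ?_
    rw [mem_erase] at ha hc
    rw [hfg a ha.1, hfg c hc.1]
  have hAQ : (∏ c ∈ Ioo i k, (g i - g c)) * ∏ c ∈ Ioo i k, (f i - f c)
      = (∏ c ∈ Ioo i k, (f i - f c)) * ∏ c ∈ Ioo i k, (g i - g c) := mul_comm _ _
  have hBP : (∏ a ∈ range i, (g a - g i)) * ∏ a ∈ range i, (f i - f a)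
      = (∏ a ∈ range i, (f a - f i)) * ∏ a ∈ range i, (g i - g a) := by
    rw [← Finset.prod_mul_distrib, ← Finset.prod_mul_distrib]
    refine Finset.prod_congr rfl fun a ha => ?_
    rw [mem_range] at ha
    rw [← hfg a (by omega)]
    ring
  rw [hR]
  calc ((∏ c ∈ Ioo i k, (g i - g c)) * ∏ a ∈ range i, (g a - g i)) *
        (∏ a ∈ (range k).erase i, ∏ c ∈ (Ioo a k).erase i, (f a - f c)) *
        ((∏ j ∈ range i, (f i - f j)) * ∏ j ∈ Ioo i k, (f i - f j))
      = ((∏ c ∈ Ioo i k, (g i - g c)) * ∏ c ∈ Ioo i k, (f i - f c)) *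
        ((∏ a ∈ range i, (g a - g i)) * ∏ a ∈ range i, (f i - f a)) *
        (∏ a ∈ (range k).erase i, ∏ c ∈ (Ioo a k).erase i, (f a - f c)) := by ring
    _ = ((∏ c ∈ Ioo i k, (f i - f c)) * ∏ c ∈ Ioo i k, (g i - g c)) *
        ((∏ a ∈ range i, (f a - f i)) * ∏ a ∈ range i, (g i - g a)) *
        (∏ a ∈ (range k).erase i, ∏ c ∈ (Ioo a k).erase i, (f a - f c)) := by
          rw [hAQ, hBP]
    _ = ((∏ c ∈ Ioo i k, (f i - f c)) * ∏ a ∈ range i, (f a - f i)) *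
        (∏ a ∈ (range k).erase i, ∏ c ∈ (Ioo a k).erase i, (f a - f c)) *
        ((∏ j ∈ range i, (g i - g j)) * ∏ j ∈ Ioo i k, (g i - g j)) := by ring

end Dratio

/-! ### The corner recurrence -/

theorem cellmem {l : List ℕ} {i : ℕ} (hi : i ∈ cor l) (c' : ptCells (rmc l i)) :
    (c' : ℕ × ℕ) ∈ ptCells l := by
  obtain ⟨c, hc⟩ := c'
  show c ∈ ptCells l
  rw [ptCells_rmc hi] at hc
  exact Finset.mem_of_mem_erase hc

theorem cellne {l : List ℕ} {i : ℕ} (hi : i ∈ cor l) (c' : ptCells (rmc l i)) :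
    (c' : ℕ × ℕ) ≠ (i, l.getD i 0 - 1) := by
  obtain ⟨c, hc⟩ := c'
  show c ≠ (i, l.getD i 0 - 1)
  rw [ptCells_rmc hi] at hc
  exact Finset.ne_of_mem_erase hc

/-- Forward map: restrict a SYT of `l` to `rmc l i`. -/
noncomputable def Fmap {l : List ℕ} {i : ℕ} (hi : i ∈ cor l) (hn : 0 < l.sum)
    (T : ptCells l → Fin l.sum) (hinj : Function.Injective T)
    (htop : T ⟨(i, l.getD i 0 - 1), corner_mem_ptCells hi⟩ = ⟨l.sum - 1, by omega⟩) :
    ptCells (rmc l i) → Fin (rmc l i).sum := fun c' =>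
  ⟨(T ⟨(c' : ℕ × ℕ), cellmem hi c'⟩).1, by
    have hm := sum_rmc hi
    have h1 : (T ⟨(c' : ℕ × ℕ), cellmem hi c'⟩).1 < l.sum := (T _).2
    have h2 : (T ⟨(c' : ℕ × ℕ), cellmem hi c'⟩).1 ≠ l.sum - 1 := by
      intro he
      have he2 : T ⟨(c' : ℕ × ℕ), cellmem hi c'⟩
          = T ⟨(i, l.getD i 0 - 1), corner_mem_ptCells hi⟩ := by
        rw [htop]; exact Fin.ext he
      exact cellne hi c' (congrArg Subtype.val (hinj he2))
    omega⟩

/-- Backward map: extend a SYT of `rmc l i` by the top value at the corner. -/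
noncomputable def Gmap {l : List ℕ} {i : ℕ} (hi : i ∈ cor l) (hn : 0 < l.sum)
    (T' : ptCells (rmc l i) → Fin (rmc l i).sum) : ptCells l → Fin l.sum := fun c =>
  if hc : (c : ℕ × ℕ) = (i, l.getD i 0 - 1) then ⟨l.sum - 1, by omega⟩
  else Fin.castLE (by have := sum_rmc hi; omega)
    (T' ⟨(c : ℕ × ℕ), by rw [ptCells_rmc hi]; exact Finset.mem_erase.2 ⟨hc, c.2⟩⟩)

theorem Fmap_isSYT {l : List ℕ} {i : ℕ} (hi : i ∈ cor l) (hn : 0 < l.sum)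
    {T : ptCells l → Fin l.sum} (hT : IsSYT l T)
    (htop : T ⟨(i, l.getD i 0 - 1), corner_mem_ptCells hi⟩ = ⟨l.sum - 1, by omega⟩) :
    IsSYT (rmc l i) (Fmap hi hn T hT.1.injective htop) := by
  obtain ⟨hbij, hrow, hcol⟩ := hT
  set F := Fmap hi hn T hbij.injective htop with hF
  have hvalF : ∀ c', (F c').1 = (T ⟨(c' : ℕ × ℕ), cellmem hi c'⟩).1 := fun c' => rfl
  have hinj : Function.Injective F := by
    intro c d hcd
    have : (T ⟨(c : ℕ × ℕ), cellmem hi c⟩).1 = (T ⟨(d : ℕ × ℕ), cellmem hi d⟩).1 := by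
      rw [← hvalF, ← hvalF, hcd]
    have h4 := hbij.injective (Fin.ext this)
    rw [Subtype.mk_eq_mk] at h4
    exact Subtype.ext h4
  refine ⟨?_, ?_, ?_⟩
  · rw [Fintype.bijective_iff_injective_and_card]
    refine ⟨hinj, ?_⟩
    rw [Fintype.card_coe, card_ptCells, Fintype.card_fin]
  · intro c d h1 h2
    rw [Fin.lt_def, hvalF, hvalF]
    rw [← Fin.lt_def]
    exact hrow _ _ h1 h2
  · intro c d h1 h2
    rw [Fin.lt_def, hvalF, hvalF, ← Fin.lt_def]
    exact hcol _ _ h1 h2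

theorem Gmap_corner {l : List ℕ} {i : ℕ} (hi : i ∈ cor l) (hn : 0 < l.sum)
    (T' : ptCells (rmc l i) → Fin (rmc l i).sum) :
    Gmap hi hn T' ⟨(i, l.getD i 0 - 1), corner_mem_ptCells hi⟩ = ⟨l.sum - 1, by omega⟩ := by
  rw [Gmap, dif_pos rfl]

theorem Gmap_isSYT {l : List ℕ} (h : Mono l) {i : ℕ} (hi : i ∈ cor l) (hn : 0 < l.sum)
    {T' : ptCells (rmc l i) → Fin (rmc l i).sum} (hT' : IsSYT (rmc l i) T') :
    IsSYT l (Gmap hi hn T') := by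
  obtain ⟨hbij, hrow, hcol⟩ := hT'
  have hm := sum_rmc hi
  have hcor := (mem_cor.1 hi).2
  set G := Gmap hi hn T' with hG
  have hvaltop : ∀ c : ptCells l, (c : ℕ × ℕ) = (i, l.getD i 0 - 1) → (G c).1 = l.sum - 1 := by
    intro c hc
    rw [hG, Gmap, dif_pos hc]
  have hvalne : ∀ c : ptCells l, ∀ hc : (c : ℕ × ℕ) ≠ (i, l.getD i 0 - 1),
      (G c).1 = (T' ⟨(c : ℕ × ℕ), by
        rw [ptCells_rmc hi]; exact Finset.mem_erase.2 ⟨hc, c.2⟩⟩).1 := by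
    intro c hc
    rw [hG, Gmap, dif_neg hc]
    simp
  have hlt : ∀ c : ptCells l, (c : ℕ × ℕ) ≠ (i, l.getD i 0 - 1) → (G c).1 < l.sum - 1 := by
    intro c hc
    have h9 : (rmc l i).sum = l.sum - 1 := by omega
    rw [hvalne c hc, ← h9]
    exact (T' _).isLt
  have hinj : Function.Injective G := by
    intro c d hcd
    by_cases hc : (c : ℕ × ℕ) = (i, l.getD i 0 - 1) <;>
      by_cases hd : (d : ℕ × ℕ) = (i, l.getD i 0 - 1)
    · exact Subtype.ext (hc.trans hd.symm)
    · exfalso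
      have h1 := hvaltop c hc
      have h2 := hlt d hd
      rw [hcd] at h1
      omega
    · exfalso
      have h1 := hvaltop d hd
      have h2 := hlt c hc
      rw [← hcd] at h1
      omega
    · have h1 := hvalne c hc
      have h2 := hvalne d hd
      rw [hcd] at h1
      have h3 := Fin.ext (h1.symm.trans h2)
      have h5 := hbij.injective h3
      rw [Subtype.mk_eq_mk] at h5
      exact Subtype.ext h5
  refine ⟨?_, ?_, ?_⟩
  · rw [Fintype.bijective_iff_injective_and_card]
    refine ⟨hinj, ?_⟩
    rw [Fintype.card_coe, card_ptCells, Fintype.card_fin]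
  · -- rows
    intro c d h1 h2
    have hcmem := c.2
    have hdmem := d.2
    rw [mem_ptCells] at hcmem hdmem
    by_cases hd : (d : ℕ × ℕ) = (i, l.getD i 0 - 1)
    · have hcne : (c : ℕ × ℕ) ≠ (i, l.getD i 0 - 1) := by
        intro hc
        rw [hc, hd] at h2
        exact lt_irrefl _ h2
      rw [Fin.lt_def, hvaltop d hd]
      exact hlt c hcne
    · by_cases hc : (c : ℕ × ℕ) = (i, l.getD i 0 - 1)
      · exfalso
        have hci : (c : ℕ × ℕ).1 = i := by rw [hc]
        have hc2 : (c : ℕ × ℕ).2 = l.getD i 0 - 1 := by rw [hc]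
        rw [hci] at h1
        rw [← h1] at hdmem
        omega
      · rw [Fin.lt_def, hvalne c hc, hvalne d hd, ← Fin.lt_def]
        exact hrow _ _ h1 h2
  · -- columns
    intro c d h1 h2
    have hcmem := c.2
    have hdmem := d.2
    rw [mem_ptCells] at hcmem hdmem
    by_cases hd : (d : ℕ × ℕ) = (i, l.getD i 0 - 1)
    · have hcne : (c : ℕ × ℕ) ≠ (i, l.getD i 0 - 1) := by
        intro hc
        rw [hc, hd] at h2
        exact lt_irrefl _ h2
      rw [Fin.lt_def, hvaltop d hd]
      exact hlt c hcne
    · by_cases hc : (c : ℕ × ℕ) = (i, l.getD i 0 - 1)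
      · exfalso
        have hci : (c : ℕ × ℕ).1 = i := by rw [hc]
        have hc2 : (c : ℕ × ℕ).2 = l.getD i 0 - 1 := by rw [hc]
        have hd1 : i < (d : ℕ × ℕ).1 := by rw [← hci]; exact h2
        have hmono := h (i + 1) (d : ℕ × ℕ).1 (by omega)
        rw [← h1] at hdmem
        omega
      · rw [Fin.lt_def, hvalne c hc, hvalne d hd, ← Fin.lt_def]
        exact hcol _ _ h1 h2

theorem Gmap_Fmap {l : List ℕ} {i : ℕ} (hi : i ∈ cor l) (hn : 0 < l.sum)
    {T : ptCells l → Fin l.sum} (hinj : Function.Injective T)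
    (htop : T ⟨(i, l.getD i 0 - 1), corner_mem_ptCells hi⟩ = ⟨l.sum - 1, by omega⟩) :
    Gmap hi hn (Fmap hi hn T hinj htop) = T := by
  funext c
  by_cases hc : (c : ℕ × ℕ) = (i, l.getD i 0 - 1)
  · rw [Gmap, dif_pos hc]
    have : c = ⟨(i, l.getD i 0 - 1), corner_mem_ptCells hi⟩ := Subtype.ext hc
    rw [this, htop]
  · rw [Gmap, dif_neg hc]
    apply Fin.ext
    simp only [Fin.coe_castLE]
    rfl

theorem Fmap_Gmap {l : List ℕ} {i : ℕ} (hi : i ∈ cor l) (hn : 0 < l.sum)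
    {T' : ptCells (rmc l i) → Fin (rmc l i).sum} (hinj : Function.Injective (Gmap hi hn T'))
    (htop : Gmap hi hn T' ⟨(i, l.getD i 0 - 1), corner_mem_ptCells hi⟩ = ⟨l.sum - 1, by omega⟩) :
    Fmap hi hn (Gmap hi hn T') hinj htop = T' := by
  funext c'
  apply Fin.ext
  show (Gmap hi hn T' ⟨(c' : ℕ × ℕ), cellmem hi c'⟩).1 = (T' c').1
  rw [Gmap, dif_neg (cellne hi c')]
  simp only [Fin.coe_castLE]

theorem exists_corner_top {l : List ℕ} (hn : 0 < l.sum)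
    {T : ptCells l → Fin l.sum} (hT : IsSYT l T) :
    ∃ i, ∃ hi : i ∈ cor l,
      T ⟨(i, l.getD i 0 - 1), corner_mem_ptCells hi⟩ = ⟨l.sum - 1, by omega⟩ := by
  obtain ⟨hbij, hrow, hcol⟩ := hT
  obtain ⟨c, hc⟩ := hbij.surjective ⟨l.sum - 1, by omega⟩
  obtain ⟨⟨a, b⟩, hmem⟩ := c
  have hmem' := hmem
  rw [mem_ptCells] at hmem'
  dsimp only at hmem'
  have hmax : ∀ d : ptCells l, T ⟨(a, b), hmem⟩ < T d → False := by
    intro d hd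
    rw [hc] at hd
    have := (T d).isLt
    rw [Fin.lt_def] at hd
    dsimp only at hd
    omega
  -- b is the last cell of the row
  have hb : b + 1 = l.getD a 0 := by
    by_contra hne
    have hcell : (a, b + 1) ∈ ptCells l :=
      mem_ptCells.2 (show a < l.length ∧ b + 1 < l.getD a 0 from ⟨hmem'.1, by omega⟩)
    exact hmax ⟨(a, b + 1), hcell⟩
      (hrow ⟨(a, b), hmem⟩ ⟨(a, b + 1), hcell⟩ rfl (by show b < b + 1; omega))
  -- the next row is shorter
  have ha : l.getD (a + 1) 0 ≤ b := by
    by_contra hgt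
    have halen : a + 1 < l.length := by
      by_contra hlen
      rw [List.getD_eq_default _ _ (by omega)] at hgt
      omega
    have hcell : (a + 1, b) ∈ ptCells l :=
      mem_ptCells.2 (show a + 1 < l.length ∧ b < l.getD (a + 1) 0 from ⟨halen, by omega⟩)
    exact hmax ⟨(a + 1, b), hcell⟩
      (hcol ⟨(a, b), hmem⟩ ⟨(a + 1, b), hcell⟩ rfl (by show a < a + 1; omega))
  have hacor : a ∈ cor l := mem_cor.2 ⟨hmem'.1, by omega⟩

  refine ⟨a, hacor, ?_⟩
  have : (⟨(a, l.getD a 0 - 1), corner_mem_ptCells hacor⟩ : ptCells l) = ⟨(a, b), hmem⟩ := by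
    apply Subtype.ext
    simp only [Prod.mk.injEq, true_and]
    omega
  rw [this, hc]

theorem card_fiber {l : List ℕ} (h : Mono l) (hn : 0 < l.sum) {i : ℕ} (hi : i ∈ cor l) :
    Nat.card {T : ptCells l → Fin l.sum //
        IsSYT l T ∧ T ⟨(i, l.getD i 0 - 1), corner_mem_ptCells hi⟩ = ⟨l.sum - 1, by omega⟩}
      = sytCount (rmc l i) := by
  rw [sytCount]
  apply Nat.card_congr
  refine
    { toFun := fun p => ⟨Fmap hi hn p.1 p.2.1.1.injective p.2.2, Fmap_isSYT hi hn p.2.1 p.2.2⟩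
      invFun := fun q => ⟨Gmap hi hn q.1, Gmap_isSYT h hi hn q.2, Gmap_corner hi hn q.1⟩
      left_inv := ?_
      right_inv := ?_ }
  · rintro ⟨T, hT, htop⟩
    exact Subtype.ext (Gmap_Fmap hi hn hT.1.injective htop)
  · rintro ⟨T', hT'⟩
    exact Subtype.ext (Fmap_Gmap hi hn (Gmap_isSYT h hi hn hT').1.injective
      (Gmap_corner hi hn T'))

theorem syt_recurrence {l : List ℕ} (h : Mono l) (hn : 0 < l.sum) :
    sytCount l = ∑ i ∈ cor l, sytCount (rmc l i) := by
  classical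
  have hpart : sytCount l = ∑ i ∈ (cor l).attach,
      Nat.card {T : ptCells l → Fin l.sum //
        IsSYT l T ∧ T ⟨(↑i, l.getD ↑i 0 - 1), corner_mem_ptCells i.2⟩
          = ⟨l.sum - 1, by omega⟩} := by
    rw [sytCount]
    have hbij : Function.Bijective
        (fun p : (Σ i : {j // j ∈ cor l}, {T : ptCells l → Fin l.sum //
            IsSYT l T ∧ T ⟨(↑i, l.getD ↑i 0 - 1), corner_mem_ptCells i.2⟩
              = ⟨l.sum - 1, by omega⟩}) =>
          (⟨p.2.1, p.2.2.1⟩ : {T : ptCells l → Fin l.sum // IsSYT l T})) := by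
      constructor
      · rintro ⟨⟨i, hic⟩, ⟨T, hT, hTt⟩⟩ ⟨⟨j, hjc⟩, ⟨S, hS, hSt⟩⟩ hpq
        dsimp only at hpq
        rw [Subtype.mk_eq_mk] at hpq
        subst hpq
        have hij : i = j := by
          have := hT.1.injective (hTt.trans hSt.symm)
          rw [Subtype.mk_eq_mk, Prod.mk.injEq] at this
          exact this.1
        subst hij
        rfl
      · rintro ⟨T, hT⟩
        obtain ⟨i, hic, htop⟩ := exists_corner_top hn hT
        exact ⟨⟨⟨i, hic⟩, ⟨T, hT, htop⟩⟩, rfl⟩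
    rw [← Nat.card_eq_of_bijective _ hbij, Nat.card_eq_fintype_card, Fintype.card_sigma,
      Finset.univ_eq_attach]
    exact Finset.sum_congr rfl fun i _ => Nat.card_eq_fintype_card.symm
  rw [hpart, ← Finset.sum_attach (cor l) (fun i => sytCount (rmc l i))]
  exact Finset.sum_congr rfl fun i _ => card_fiber h hn i.2

section Main
open Finset

theorem syt_zero {l : List ℕ} (h0 : l.sum = 0) : sytCount l = 1 := by
  have hcells : ptCells l = ∅ := by
    rw [← Finset.card_eq_zero, card_ptCells, h0]
  have hempty : IsEmpty (ptCells l : Type) := by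
    constructor
    rintro ⟨c, hc⟩
    rw [hcells] at hc
    exact absurd hc (Finset.notMem_empty c)
  have hsyt : ∀ T : ptCells l → Fin l.sum, IsSYT l T := by
    intro T
    refine ⟨⟨fun a => isEmptyElim a, fun y => absurd y.isLt (by omega)⟩,
      fun c => isEmptyElim c, fun c => isEmptyElim c⟩
  rw [sytCount, Nat.card_eq_one_iff_unique]
  constructor
  · constructor
    rintro ⟨T, _⟩ ⟨S, _⟩
    refine Subtype.ext (funext fun c => isEmptyElim c)
  · exact ⟨⟨fun c => isEmptyElim c, hsyt _⟩⟩

theorem main_list (l : List ℕ) (h : Mono l) :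
    sytCount l * ∏ c ∈ ptCells l, hookLen l c = Nat.factorial l.sum := by
  suffices H : ∀ n l, Mono l → l.sum = n →
      sytCount l * ∏ c ∈ ptCells l, hookLen l c = Nat.factorial l.sum from
    H l.sum l h rfl
  intro n
  induction n using Nat.strong_induction_on with
  | _ n ih =>
    intro l h hsum
    rcases Nat.eq_zero_or_pos n with h0 | hpos
    · subst h0
      rw [syt_zero hsum, one_mul]
      have hcells : ptCells l = ∅ := by
        rw [← Finset.card_eq_zero, card_ptCells, hsum]
      rw [hcells, hsum]
      simp
    -- positive case
    subst hsum
    have hn : 0 < l.sum := hpos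
    have hk : 0 < l.length := by
      rcases l with _ | ⟨a, t⟩
      · simp at hn
      · simp
    set fQ : ℕ → ℚ := fun j => ((beta l j : ℕ) : ℚ) with hfQ
    set termf : ℕ → ℚ := fun i =>
      fQ i * ∏ j ∈ (range l.length).erase i, ((fQ i - fQ j - 1) / (fQ i - fQ j)) with htermf
    have hbdist : ∀ i, i < l.length → ∀ j, j < l.length → i ≠ j → beta l i ≠ beta l j := by
      intro i hi j hj hij
      rcases Nat.lt_or_ge i j with hlt | hge
      · exact Nat.ne_of_gt (beta_strict_anti h hlt hj)
      · exact Nat.ne_of_lt (beta_strict_anti h (by omega) hi)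
    have hfdist : ∀ i < l.length, ∀ j < l.length, i ≠ j → fQ i ≠ fQ j := by
      intro i hi j hj hij he
      simp only [hfQ] at he
      exact hbdist i hi j hj hij (Nat.cast_injective he)
    -- the key identity evaluates to l.sum
    have hkeyval : ∑ i ∈ range l.length, termf i = (l.sum : ℚ) := by
      simp only [htermf]
      rw [key_identity l.length fQ hfdist]
      have h1 : ∑ i ∈ range l.length, beta l i
          = l.sum + ∑ i ∈ range l.length, (l.length - 1 - i) := by
        unfold beta
        rw [Finset.sum_add_distrib, sum_eq_sum_getD l]
      have h2 : ∑ i ∈ range l.length, (l.length - 1 - i) = ∑ i ∈ range l.length, i :=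
        Finset.sum_range_reflect (fun j => j) l.length
      have h3 := Finset.sum_range_id_mul_two l.length
      have h4 : 2 * ∑ i ∈ range l.length, beta l i
          = 2 * l.sum + l.length * (l.length - 1) := by omega
      have h5 : (∑ i ∈ range l.length, fQ i)
          = ((∑ i ∈ range l.length, beta l i : ℕ) : ℚ) := by
        rw [Nat.cast_sum]
      have h6 : ((l.length * (l.length - 1) : ℕ) : ℚ)
          = (l.length : ℚ) * ((l.length : ℚ) - 1) := by
        rw [Nat.cast_mul, Nat.cast_sub hk, Nat.cast_one]
      have h7 : (2 : ℚ) * ((∑ i ∈ range l.length, beta l i : ℕ) : ℚ)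
          = 2 * (l.sum : ℚ) + (l.length : ℚ) * ((l.length : ℚ) - 1) := by
        rw [← h6, ← Nat.cast_ofNat (n := 2), ← Nat.cast_mul, ← Nat.cast_mul,
          ← Nat.cast_add, h4]
      rw [h5]
      linarith
    -- non-corner terms vanish
    have hzero : ∀ i ∈ range l.length, i ∉ cor l → termf i = 0 := by
      intro i hi hic
      rw [mem_range] at hi
      rw [mem_cor] at hic
      push_neg at hic
      have hle := hic hi
      rcases Nat.lt_or_ge (i + 1) l.length with hik | hik
      · have hmono := h i (i + 1) (by omega)
        have hb : beta l i = beta l (i + 1) + 1 := by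
          unfold beta
          omega
        have hnum : fQ i - fQ (i + 1) - 1 = 0 := by
          simp only [hfQ]
          rw [hb]
          push_cast
          ring
        simp only [htermf]
        rw [Finset.prod_eq_zero (Finset.mem_erase.2 ⟨by omega, mem_range.2 hik⟩)
          (by rw [hnum, zero_div]), mul_zero]
      · have hgd : l.getD (i + 1) 0 = 0 := List.getD_eq_default _ _ (by omega)
        have hb : beta l i = 0 := by
          unfold beta
          omega
        simp only [htermf, hfQ]
        rw [hb, Nat.cast_zero, zero_mul]
    have hsumcor : ∑ i ∈ cor l, termf i = ∑ i ∈ range l.length, termf i := by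
      apply Finset.sum_subset
      · exact Finset.filter_subset _ _
      · exact fun i hi hic => hzero i hi hic
    -- per-corner computation
    set HQ : ℚ := ((∏ c ∈ ptCells l, hookLen l c : ℕ) : ℚ) with hHQ
    set Df : ℚ := ∏ a ∈ range l.length, ∏ c ∈ Ioo a l.length, (fQ a - fQ c) with hDf
    have hDfcast :
        ((∏ a ∈ range l.length, ∏ c ∈ Ioo a l.length, (beta l a - beta l c) : ℕ) : ℚ)
          = Df := by
      rw [hDf, Nat.cast_prod]
      refine Finset.prod_congr rfl fun a _ => ?_
      rw [Nat.cast_prod]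
      refine Finset.prod_congr rfl fun c hc => ?_
      rw [mem_Ioo] at hc
      rw [Nat.cast_sub (le_of_lt (beta_strict_anti h hc.1 hc.2))]
    have hE2 : HQ * Df
        = ((∏ i ∈ range l.length, Nat.factorial (beta l i) : ℕ) : ℚ) := by
      rw [← hDfcast, hHQ, ← Nat.cast_mul, hook_prod_beta h]
    have hcorner : ∀ i ∈ cor l,
        ((sytCount (rmc l i) : ℕ) : ℚ) * HQ
          = ((l.sum - 1).factorial : ℚ) * termf i := by
      intro i hic
      have hi : i < l.length := (mem_cor.1 hic).1
      have hcor2 := (mem_cor.1 hic).2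
      have hml' : Mono (rmc l i) := mono_rmc h hic
      have hsum' : (rmc l i).sum + 1 = l.sum := sum_rmc hic
      have hlen' : (rmc l i).length = l.length := length_rmc l i
      set gQ : ℕ → ℚ := fun j => ((beta (rmc l i) j : ℕ) : ℚ) with hgQ
      have hbipos : 1 ≤ l.getD i 0 := by omega
      have hbeta1 : 1 ≤ beta l i := by unfold beta; omega
      have hbeta' : ∀ j, beta (rmc l i) j = if j = i then beta l i - 1 else beta l j := by
        intro j
        unfold beta
        rw [hlen', getD_rmc l hi j]
        by_cases hji : j = i
        · subst hji
          rw [if_pos rfl, if_pos rfl]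
          omega
        · rw [if_neg hji, if_neg hji]
      have hfg : ∀ j, j ≠ i → fQ j = gQ j := by
        intro j hj
        simp only [hfQ, hgQ]
        rw [hbeta' j, if_neg hj]
      have hgi : gQ i = fQ i - 1 := by
        simp only [hfQ, hgQ]
        rw [hbeta' i, if_pos rfl, Nat.cast_sub hbeta1, Nat.cast_one]
      set Dg : ℚ := ∏ a ∈ range l.length, ∏ c ∈ Ioo a l.length, (gQ a - gQ c) with hDg
      have hDgcast :
          ((∏ a ∈ range l.length, ∏ c ∈ Ioo a l.length,
              (beta (rmc l i) a - beta (rmc l i) c) : ℕ) : ℚ) = Dg := by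
        rw [hDg, Nat.cast_prod]
        refine Finset.prod_congr rfl fun a _ => ?_
        rw [Nat.cast_prod]
        refine Finset.prod_congr rfl fun c hc => ?_
        rw [mem_Ioo] at hc
        rw [Nat.cast_sub (le_of_lt (beta_strict_anti hml' hc.1 (by rw [hlen']; exact hc.2)))]
      set HQ' : ℚ := ((∏ c ∈ ptCells (rmc l i), hookLen (rmc l i) c : ℕ) : ℚ) with hHQ'
      have hE3 : HQ' * Dg
          = ((∏ j ∈ range l.length, Nat.factorial (beta (rmc l i) j) : ℕ) : ℚ) := by
        have h9 := hook_prod_beta hml'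
        rw [hlen'] at h9
        rw [← hDgcast, hHQ', ← Nat.cast_mul, h9]
      have hE4 : ((∏ j ∈ range l.length, Nat.factorial (beta l j) : ℕ) : ℚ)
          = fQ i * ((∏ j ∈ range l.length, Nat.factorial (beta (rmc l i) j) : ℕ) : ℚ) := by
        have hfact : Nat.factorial (beta l i)
            = beta l i * Nat.factorial (beta (rmc l i) i) := by
          rw [hbeta' i, if_pos rfl]
          have h9 : beta l i = (beta l i - 1) + 1 := by omega
          conv_lhs => rw [h9]
          rw [Nat.factorial_succ]
          congr 1
          omega
        have hrest : ∏ j ∈ (range l.length).erase i, Nat.factorial (beta l j)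
            = ∏ j ∈ (range l.length).erase i, Nat.factorial (beta (rmc l i) j) := by
          refine Finset.prod_congr rfl fun j hj => ?_
          rw [mem_erase] at hj
          rw [hbeta' j, if_neg hj.1]
        rw [← Finset.mul_prod_erase (range l.length) _ (mem_range.2 hi),
          ← Finset.mul_prod_erase (range l.length)
            (fun j => Nat.factorial (beta (rmc l i) j)) (mem_range.2 hi), hfact, hrest]
        push_cast
        simp only [hfQ]
        ring
      have hPfne : ∀ j ∈ (range l.length).erase i, fQ i - fQ j ≠ 0 := by
        intro j hj
        rw [mem_erase, mem_range] at hj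
        intro hzero
        exact hfdist i hi j hj.2 (Ne.symm hj.1) (sub_eq_zero.1 hzero)
      set Pf : ℚ := ∏ j ∈ (range l.length).erase i, (fQ i - fQ j) with hPf
      set Pg : ℚ := ∏ j ∈ (range l.length).erase i, (gQ i - gQ j) with hPg
      have hPfnz : Pf ≠ 0 := by
        rw [hPf]
        exact Finset.prod_ne_zero_iff.2 hPfne
      have hE5 : Dg * Pf = Df * Pg := Dratio fQ gQ i l.length hi hfg
      have hE6 : termf i * Pf = fQ i * Pg := by
        simp only [htermf]
        rw [Finset.prod_div_distrib]
        have h9 : ∏ j ∈ (range l.length).erase i, (fQ i - fQ j - 1) = Pg := by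
          rw [hPg]
          refine Finset.prod_congr rfl fun j hj => ?_
          rw [mem_erase] at hj
          rw [hgi, ← hfg j hj.1]
          ring
        rw [h9, ← hPf]
        field_simp
      have hsum'' : (rmc l i).sum < l.sum := by omega
      have hE1 := ih (rmc l i).sum hsum'' (rmc l i) hml' rfl
      have hE1Q : ((sytCount (rmc l i) : ℕ) : ℚ) * HQ'
          = ((l.sum - 1).factorial : ℚ) := by
        rw [hHQ', ← Nat.cast_mul, hE1]
        congr 2
        omega
      have hHQ'pos : (0 : ℚ) < HQ' := by
        rw [hHQ']
        have h9 : 0 < ∏ c ∈ ptCells (rmc l i), hookLen (rmc l i) c :=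
          Finset.prod_pos fun c _ => hook_pos (rmc l i) c
        exact_mod_cast h9
      have hDfnz : Df ≠ 0 := by
        rw [hDf]
        apply Finset.prod_ne_zero_iff.2
        intro a ha
        apply Finset.prod_ne_zero_iff.2
        intro c hc
        rw [mem_Ioo] at hc
        have h9 := beta_strict_anti h hc.1 hc.2
        intro hzero
        simp only [hfQ] at hzero
        rw [sub_eq_zero] at hzero
        have := Nat.cast_injective hzero
        omega
      have hcancel : Df * (Pf * HQ') ≠ 0 :=
        mul_ne_zero hDfnz (mul_ne_zero hPfnz (ne_of_gt hHQ'pos))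
      apply mul_right_cancel₀ hcancel
      calc ((sytCount (rmc l i) : ℕ) : ℚ) * HQ * (Df * (Pf * HQ'))
          = (((sytCount (rmc l i) : ℕ) : ℚ) * HQ') * ((HQ * Df) * Pf) := by ring
        _ = ((l.sum - 1).factorial : ℚ) *
              (((∏ j ∈ range l.length, Nat.factorial (beta l j) : ℕ) : ℚ) * Pf) := by
            rw [hE1Q, hE2]
        _ = ((l.sum - 1).factorial : ℚ) *
              ((fQ i * ((∏ j ∈ range l.length,
                Nat.factorial (beta (rmc l i) j) : ℕ) : ℚ)) * Pf) := by
            rw [hE4]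
        _ = ((l.sum - 1).factorial : ℚ) * ((fQ i * (HQ' * Dg)) * Pf) := by rw [hE3]
        _ = ((l.sum - 1).factorial : ℚ) * (fQ i * (HQ' * (Dg * Pf))) := by ring
        _ = ((l.sum - 1).factorial : ℚ) * (fQ i * (HQ' * (Df * Pg))) := by rw [hE5]
        _ = (((l.sum - 1).factorial : ℚ) * (fQ i * Pg)) * (Df * HQ') := by ring
        _ = (((l.sum - 1).factorial : ℚ) * (termf i * Pf)) * (Df * HQ') := by rw [hE6]
        _ = ((l.sum - 1).factorial : ℚ) * termf i * (Df * (Pf * HQ')) := by ring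
    -- assemble
    have hrec := syt_recurrence h hn
    have h9 : ∑ i ∈ cor l, ((sytCount (rmc l i) : ℕ) : ℚ) * HQ
        = ((l.sum - 1).factorial : ℚ) * ∑ i ∈ cor l, termf i := by
      rw [Finset.mul_sum]
      exact Finset.sum_congr rfl fun i hi => hcorner i hi
    have h10 : ((sytCount l : ℕ) : ℚ) * HQ = (l.sum.factorial : ℚ) := by
      rw [hrec, Nat.cast_sum, Finset.sum_mul, h9, hsumcor, hkeyval,
        ← Nat.mul_factorial_pred hn.ne', Nat.cast_mul]
      ring
    have h11 : ((sytCount l * ∏ c ∈ ptCells l, hookLen l c : ℕ) : ℚ)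
        = ((l.sum.factorial : ℕ) : ℚ) := by
      rw [Nat.cast_mul, ← hHQ]
      exact h10
    exact Nat.cast_injective h11
end Main

theorem mono_of_sorted {l : List ℕ} (hs : l.Pairwise (· ≥ ·)) : Mono l := by
  intro i j hij
  rcases Nat.lt_or_ge j l.length with hj | hj
  · have hi : i < l.length := by omega
    rcases Nat.eq_or_lt_of_le hij with rfl | hlt
    · exact le_refl _
    · rw [List.getD_eq_get _ _ ⟨i, hi⟩, List.getD_eq_get _ _ ⟨j, hj⟩]
      exact List.Pairwise.rel_get_of_lt hs (by exact_mod_cast hlt)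
  · rw [List.getD_eq_default _ _ hj]
    exact Nat.zero_le _


/-- The hook length formula: `f^λ = n! / ∏_{u ∈ λ} h(u)`, stated in product form. -/
theorem hook_length_formula (n : ℕ) (μ : Nat.Partition n) :
    sytCount (partList μ) * ∏ c ∈ ptCells (partList μ), hookLen (partList μ) c
      = Nat.factorial n := by
  have hs : (partList μ).Pairwise (· ≥ ·) := μ.parts.pairwise_sort _
  have hsum : (partList μ).sum = n := by
    have h1 : ((partList μ : List ℕ) : Multiset ℕ) = μ.parts := μ.parts.sort_eq _
    have h2 := congrArg Multiset.sum h1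
    rw [Multiset.sum_coe] at h2
    rw [partList] at h2 ⊢
    rw [h2]
    exact μ.parts_sum
  rw [main_list _ (mono_of_sorted hs), hsum]
end

section
/- The expected LIS length of a uniformly random permutation satisfies limsup_{n→∞} E[L(σ_n)]/√n ≤ e. -/
/-!
First moment method. An increasing subsequence of length `k` of `σ` is a pair of `k`-subsets
(positions and values) matched by `σ`, and a given pair is matched by at most `(n - k)!`
permutations, so `P(L(σ_n) ≥ k) ≤ C(n,k)² (n-k)! / n! = C(n,k) / k! ≤ (e² n / k²)^k` by
`k! ≥ (k/e)^k`. With `k ≈ c √n` for a constant `c > e` this is `(e/c)^(2k)`, geometrically small,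
and `E[L] ≤ k + n P(L > k)` gives `E[L] / √n ≤ c + o(1)`.
-/

/-- Length of the longest strictly increasing subsequence of the sequence `a`. -/
noncomputable def lisLen {n : ℕ} {α : Type*} [LinearOrder α] (a : Fin n → α) : ℕ :=
  sSup {k | ∃ f : Fin k → Fin n, StrictMono f ∧ StrictMono (a ∘ f)}

open Filter

open Finset Topology
open scoped Nat

section lisLen

variable {n : ℕ} {α : Type*} [LinearOrder α] (a : Fin n → α)

lemma zero_mem_lisLen_set :
    0 ∈ {k | ∃ f : Fin k → Fin n, StrictMono f ∧ StrictMono (a ∘ f)} :=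
  ⟨Fin.elim0, fun i => i.elim0, fun i => i.elim0⟩

lemma le_of_mem_lisLen_set :
    ∀ m ∈ {k | ∃ f : Fin k → Fin n, StrictMono f ∧ StrictMono (a ∘ f)}, m ≤ n := by
  rintro m ⟨f, hf, -⟩
  simpa using Fintype.card_le_of_injective f hf.injective

lemma lisLen_le : lisLen a ≤ n :=
  csSup_le ⟨0, zero_mem_lisLen_set a⟩ (le_of_mem_lisLen_set a)

lemma exists_strictMono_of_le_lisLen {k : ℕ} (hk : k ≤ lisLen a) :
    ∃ f : Fin k → Fin n, StrictMono f ∧ StrictMono (a ∘ f) := by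
  obtain ⟨f, hf, haf⟩ : lisLen a ∈ {k | ∃ f : Fin k → Fin n, StrictMono f ∧ StrictMono (a ∘ f)} :=
    Nat.sSup_mem ⟨0, zero_mem_lisLen_set a⟩ ⟨n, le_of_mem_lisLen_set a⟩
  exact ⟨f ∘ Fin.castLE hk, hf.comp (Fin.strictMono_castLE hk), haf.comp (Fin.strictMono_castLE hk)⟩

end lisLen

lemma card_strictMono_le_choose (k n : ℕ) :
    #{f : Fin k → Fin n | StrictMono f} ≤ n.choose k := by
  calc #{f : Fin k → Fin n | StrictMono f}
      ≤ #(powersetCard k (univ : Finset (Fin n))) := by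
        refine card_le_card_of_injOn (fun f => univ.image f) (fun f hf => ?_)
          (fun f hf g hg hfg => ?_)
        · simp only [coe_filter, Set.mem_ofPred_eq, mem_univ, true_and] at hf
          simp [mem_powersetCard, card_image_of_injective _ hf.injective]
        · simp only [coe_filter, Set.mem_ofPred_eq, mem_univ, true_and] at hf hg
          rw [← hf.range_inj hg, ← Set.image_univ, ← Set.image_univ, ← coe_univ, ← coe_image,
            ← coe_image]
          exact congrArg (fun s : Finset (Fin n) => (s : Set (Fin n))) hfg
    _ = n.choose k := by simp

lemma card_perm_apply_eq_le {α β : Type*} [Fintype α] [DecidableEq α] [Fintype β]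
    {f g : β → α} (hf : f.Injective) (hg : g.Injective) :
    #{σ : Equiv.Perm α | ∀ i, σ (f i) = g i} ≤ (Fintype.card α - Fintype.card β)! := by
  classical
  let restrict (σ : Equiv.Perm α) (hσ : ∀ i, σ (f i) = g i) :
      ↥(Set.range f)ᶜ ↪ ↥(Set.range g)ᶜ :=
    ⟨fun x => ⟨σ x, fun ⟨i, hi⟩ => x.2 ⟨i, σ.injective ((hσ i).trans hi)⟩⟩,
      fun x y hxy => Subtype.ext (σ.injective (congrArg Subtype.val hxy))⟩
  have hcompl {h : β → α} (hh : h.Injective) :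
      Fintype.card ↥(Set.range h)ᶜ = Fintype.card α - Fintype.card β := by
    rw [Fintype.card_compl_set, Set.card_range_of_injective hh]
  calc #{σ : Equiv.Perm α | ∀ i, σ (f i) = g i}
      ≤ Fintype.card (↥(Set.range f)ᶜ ↪ ↥(Set.range g)ᶜ) := by
        rw [← Fintype.card_subtype]
        refine Fintype.card_le_of_injective (fun σ => restrict σ.1 σ.2) fun σ τ hστ => ?_
        ext x
        by_cases hx : x ∈ Set.range f
        · obtain ⟨i, rfl⟩ := hx
          rw [σ.2 i, τ.2 i]
        · exact congrArg (fun e : ↥(Set.range f)ᶜ ↪ ↥(Set.range g)ᶜ => (e ⟨x, hx⟩ : α)) hστ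
    _ = (Fintype.card α - Fintype.card β)! := by
        rw [Fintype.card_embedding_eq, hcompl hf, hcompl hg, Nat.descFactorial_self]

lemma card_lt_lisLen_le (n k : ℕ) :
    #{σ : Equiv.Perm (Fin n) | k < lisLen (fun i => σ i)}
      ≤ n.choose (k + 1) ^ 2 * (n - (k + 1))! := by
  set S : Finset (Fin (k + 1) → Fin n) := {f | StrictMono f}
  calc #{σ : Equiv.Perm (Fin n) | k < lisLen (fun i => σ i)}
      ≤ #((S ×ˢ S).biUnion fun p => {σ : Equiv.Perm (Fin n) | ∀ i, σ (p.1 i) = p.2 i}) := by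
        refine card_le_card fun σ hσ => ?_
        obtain ⟨f, hf, hσf⟩ := exists_strictMono_of_le_lisLen _ (mem_filter.1 hσ).2
        exact mem_biUnion.2 ⟨(f, fun i => σ (f i)), by simpa [S] using ⟨hf, hσf⟩, by simp⟩
    _ ≤ #(S ×ˢ S) * (n - (k + 1))! := by
        refine card_biUnion_le_card_mul _ _ _ fun p hp => ?_
        simp only [S, mem_product, mem_filter, mem_univ, true_and] at hp
        have := card_perm_apply_eq_le hp.1.injective hp.2.injective
        rw [Fintype.card_fin, Fintype.card_fin] at this
        -- the two sides decide `∀ i, _` by different (equal) instances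
        convert this
    _ ≤ n.choose (k + 1) ^ 2 * (n - (k + 1))! := by
        rw [card_product, sq]
        gcongr <;> exact card_strictMono_le_choose (k + 1) n

lemma sum_le_mul_card_add_mul_card_filter_lt {ι : Type*} (s : Finset ι) (f : ι → ℕ)
    {n : ℕ} (hf : ∀ i ∈ s, f i ≤ n) (k : ℕ) :
    ∑ i ∈ s, f i ≤ k * #s + n * #{i ∈ s | k < f i} := by
  calc ∑ i ∈ s, f i ≤ ∑ i ∈ s, (k + n * if k < f i then 1 else 0) := by
        refine sum_le_sum fun i hi => ?_
        have := hf i hi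
        split_ifs <;> omega
    _ = k * #s + n * #{i ∈ s | k < f i} := by
        rw [sum_add_distrib, ← mul_sum, sum_boole, sum_const, smul_eq_mul, mul_comm, Nat.cast_id]

lemma choose_sq_mul_factorial_mul_factorial (n k : ℕ) :
    n.choose k ^ 2 * (n - k)! * k ! = n.choose k * n ! := by
  rcases le_or_gt k n with hkn | hnk
  · rw [← Nat.choose_mul_factorial_mul_factorial hkn]
    ring
  · simp [Nat.choose_eq_zero_of_lt hnk]

noncomputable def expectedLis (n : ℕ) : ℝ :=
  (∑ σ : Equiv.Perm (Fin n), (lisLen (fun i => σ i) : ℝ)) / n !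

lemma expectedLis_le (n k : ℕ) :
    expectedLis n ≤ k + n * (n.choose (k + 1) / (k + 1)! : ℝ) := by
  have hsum : (∑ σ : Equiv.Perm (Fin n), (lisLen (fun i => σ i) : ℝ))
      ≤ k * n ! + n * #{σ : Equiv.Perm (Fin n) | k < lisLen (fun i => σ i)} := by
    have := sum_le_mul_card_add_mul_card_filter_lt univ
      (fun σ : Equiv.Perm (Fin n) => lisLen (fun i => σ i)) (fun σ _ => lisLen_le _) k
    rw [card_univ, Fintype.card_perm, Fintype.card_fin] at this
    exact_mod_cast this
  have hcount : (#{σ : Equiv.Perm (Fin n) | k < lisLen (fun i => σ i)} : ℝ)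
      ≤ n.choose (k + 1) / (k + 1)! * n ! := by
    rw [div_mul_eq_mul_div, le_div_iff₀ (by positivity)]
    exact_mod_cast (Nat.mul_le_mul_right _ (card_lt_lisLen_le n k)).trans_eq
      (choose_sq_mul_factorial_mul_factorial n (k + 1))
  rw [expectedLis, div_le_iff₀ (by positivity)]
  calc (∑ σ : Equiv.Perm (Fin n), (lisLen (fun i => σ i) : ℝ))
      ≤ k * n ! + n * #{σ : Equiv.Perm (Fin n) | k < lisLen (fun i => σ i)} := hsum
    _ ≤ k * n ! + n * (n.choose (k + 1) / (k + 1)! * n !) := by gcongr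
    _ = (k + n * (n.choose (k + 1) / (k + 1)! : ℝ)) * n ! := by ring

lemma choose_div_factorial_le (n k : ℕ) :
    (n.choose k / k ! : ℝ) ≤ (Real.exp 1 ^ 2 * n / k ^ 2) ^ k := by
  rcases k.eq_zero_or_pos with rfl | hk
  · simp
  have hpos : (0 : ℝ) < k ^ k / Real.exp 1 ^ k := by positivity
  have hstirling : (k : ℝ) ^ k / Real.exp 1 ^ k ≤ k ! := by
    rw [Real.exp_one_pow, div_le_iff₀ (by positivity), mul_comm, ← div_le_iff₀ (by positivity)]
    exact Real.pow_div_factorial_le_exp _ (Nat.cast_nonneg k) k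
  calc (n.choose k / k ! : ℝ) ≤ n ^ k / k ! / k ! := by
        gcongr
        exact Nat.choose_le_pow_div k n
    _ = n ^ k / (k ! : ℝ) ^ 2 := by rw [div_div, sq]
    _ ≤ n ^ k / (k ^ k / Real.exp 1 ^ k) ^ 2 := by gcongr
    _ = (Real.exp 1 ^ 2 * n / k ^ 2) ^ k := by
        rw [div_pow, div_div_eq_mul_div, div_pow, mul_pow, ← pow_mul, ← pow_mul, ← pow_mul,
          ← pow_mul, mul_comm 2 k, mul_comm]

lemma expectedLis_div_sqrt_le {c : ℝ} (hc : 0 < c) (n : ℕ) :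
    expectedLis n / √n ≤ c + √n * (Real.exp 1 / c) ^ (2 * (⌊c * √n⌋₊ + 1)) := by
  set m := ⌊c * √n⌋₊
  have hm : (m : ℝ) ≤ c * √n := Nat.floor_le (by positivity)
  have hbase : Real.exp 1 ^ 2 * n / ((m + 1 : ℕ) : ℝ) ^ 2 ≤ (Real.exp 1 / c) ^ 2 := by
    have hsq : (c * √n) ^ 2 ≤ ((m + 1 : ℕ) : ℝ) ^ 2 := by
      push_cast
      gcongr
      exact (Nat.lt_floor_add_one _).le
    rw [mul_pow, Real.sq_sqrt (Nat.cast_nonneg n)] at hsq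
    rw [div_pow, div_le_div_iff₀ (by positivity) (by positivity)]
    nlinarith [Real.exp_pos 1]
  calc expectedLis n / √n
      ≤ (m + n * ((Real.exp 1 / c) ^ 2) ^ (m + 1)) / √n := by
        gcongr
        refine (expectedLis_le n m).trans ?_
        gcongr
        exact (choose_div_factorial_le n (m + 1)).trans (by gcongr)
    _ = m / √n + n / √n * (Real.exp 1 / c) ^ (2 * (m + 1)) := by
        rw [add_div, mul_div_right_comm, pow_mul]
    _ ≤ c + √n * (Real.exp 1 / c) ^ (2 * (m + 1)) := by
        rw [Real.div_sqrt]
        gcongr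
        exact div_le_of_le_mul₀ (Real.sqrt_nonneg _) hc.le hm

lemma tendsto_sqrt_mul_pow_atTop_nhds_zero {q : ℝ} (hq₀ : 0 ≤ q) (hq₁ : q < 1) {k : ℕ → ℕ}
    (hk : ∀ n : ℕ, √(n : ℝ) ≤ k n) : Tendsto (fun n : ℕ => √n * q ^ k n) atTop (𝓝 0) := by
  have hfloor : Tendsto (fun n : ℕ => ⌊√n⌋₊) atTop atTop :=
    tendsto_nat_floor_atTop.comp (Real.tendsto_sqrt_atTop.comp tendsto_natCast_atTop_atTop)
  have hgeom : Tendsto (fun m : ℕ => ((m : ℝ) + 1) * q ^ m) atTop (𝓝 0) := by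
    simpa [add_mul] using (tendsto_self_mul_const_pow_of_lt_one hq₀ hq₁).add
      (tendsto_pow_atTop_nhds_zero_of_lt_one hq₀ hq₁)
  refine squeeze_zero (fun n => by positivity) (fun n => ?_) (hgeom.comp hfloor)
  exact mul_le_mul (Nat.lt_floor_add_one _).le
    (pow_le_pow_of_le_one hq₀ hq₁.le (Nat.floor_le_of_le (hk n))) (by positivity) (by positivity)

/-- Hammersley's upper bound: `limsup_{n→∞} E[L(σ_n)]/√n ≤ e`. -/
theorem limsup_expected_lis_le_e :
    limsup
      (fun n : ℕ =>
        (∑ σ : Equiv.Perm (Fin n), (lisLen (fun i => σ i) : ℝ)) / (Nat.factorial n : ℝ)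
          / Real.sqrt n)
      atTop ≤ Real.exp 1 := by
  change limsup (fun n : ℕ => expectedLis n / √n) atTop ≤ Real.exp 1
  refine le_of_forall_gt_imp_ge_of_dense fun c hc => ?_
  obtain ⟨c', he, hc'⟩ := exists_between hc
  have hc'₁ : 1 ≤ c' := (Real.one_lt_exp_iff.2 one_pos).le.trans he.le
  have htail := tendsto_sqrt_mul_pow_atTop_nhds_zero (by positivity)
    ((div_lt_one (by positivity)).2 he) (k := fun n => 2 * (⌊c' * √n⌋₊ + 1)) fun n => by
      have := Nat.lt_floor_add_one (c' * √n)
      push_cast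
      nlinarith [Real.sqrt_nonneg n]
  refine limsup_le_of_le (isCoboundedUnder_le_of_le atTop fun n => by
    unfold expectedLis; positivity) ?_
  filter_upwards [htail.eventually_lt_const (sub_pos.2 hc')] with n hn
  linarith [expectedLis_div_sqrt_le (by positivity : 0 < c') n]
end
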